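/- arXiv:2212.09296 — 7 statements merged into one kernel-verified Lean document; each statement's English description precedes it below -/
import Mathlib

section
/- For every Tychonoff space X there exist a realcompact space υX and a map υ : X → υX which is a homeomorphism onto a dense C-embedded subspace of υX, such that the map C(υX) → C(X), u ↦ u ∘ υ, is simultaneously a ring isomorphism and a vector lattice isomorphism. Moreover, these properties determine υX up to homeomorphism. -/
open Function Topology Filter Set

universe u

/-- A topological space is *realcompact* if it is homeomorphic to a closed subspace of a
product of copies of `ℝ`. -/
def Realcompact (Y : Type u) [TopologicalSpace Y] : Prop :=
  ∃ (ι : Type u) (s : Set (ι → ℝ)), IsClosed s ∧ Nonempty (Y ≃ₜ s)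

/-- A subset `s` of a topological space `Y` is *C-embedded* in `Y` if every continuous
real-valued function on `s` extends to a continuous real-valued function on `Y`. -/
def CEmbedded {Y : Type u} [TopologicalSpace Y] (s : Set Y) : Prop :=
  ∀ f : C(s, ℝ), ∃ g : C(Y, ℝ), ∀ x : s, g x = f x

/-- The canonical evaluation map of `X` into `ℝ^{C(X,ℝ)}`. -/
def hewittCan (X : Type u) [TopologicalSpace X] : X → (C(X, ℝ) → ℝ) :=
  fun x f => f x

lemma continuous_hewittCan (X : Type u) [TopologicalSpace X] :
    Continuous (hewittCan X) :=
  continuous_pi fun f => f.continuous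

lemma isEmbedding_hewittCan (X : Type u) [TopologicalSpace X] [T35Space X] :
    IsEmbedding (hewittCan X) := by
  refine ⟨?_, ?_⟩
  · rw [isInducing_iff_nhds]
    intro x
    refine le_antisymm (((continuous_hewittCan X).tendsto x).le_comap) ?_
    intro U hU
    obtain ⟨V, hVU, hVopen, hxV⟩ := mem_nhds_iff.1 hU
    obtain ⟨f, hfc, hfx, hf1⟩ :=
      CompletelyRegularSpace.completely_regular x Vᶜ hVopen.isClosed_compl
        (by simpa using hxV)
    set g : C(X, ℝ) := ⟨fun y => (f y : ℝ), by continuity⟩ with hg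
    refine mem_comap.2 ⟨{z | z g < 1}, ?_, ?_⟩
    · have : Continuous fun z : C(X, ℝ) → ℝ => z g := continuous_apply g
      refine (this.isOpen_preimage _ isOpen_Iio).mem_nhds ?_
      show (f x : ℝ) < 1
      rw [hfx]
      norm_num
    · intro y hy
      have hy' : (f y : ℝ) < 1 := hy
      refine hVU (by_contra fun hyV => ?_)
      have h1 : f y = 1 := hf1 hyV
      rw [h1] at hy'
      simp at hy'
  · intro x y hxy
    by_contra hne
    obtain ⟨f, hfc, hfxy⟩ := separatesPoints_continuous_of_t35Space hne
    exact hfxy (congrFun hxy ⟨f, hfc⟩)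

/-- For every Tychonoff space `X` there exist a realcompact space `υX`
and a map `υ : X → υX` which is a homeomorphism onto a dense C-embedded subspace of `υX`,
such that `C(υX) → C(X)`, `u ↦ u ∘ υ`, is simultaneously a ring isomorphism and a vector
lattice isomorphism.  These properties determine `υX` up to homeomorphism. -/
theorem hewitt_realcompactification (X : Type u) [TopologicalSpace X] [T35Space X] :
    ∃ (Y : Type u) (_ : TopologicalSpace Y), Realcompact Y ∧
      (∃ υ : C(X, Y), IsEmbedding (υ : X → Y) ∧ Dense (Set.range υ) ∧
        CEmbedded (Set.range υ) ∧
        Bijective (fun u : C(Y, ℝ) => u.comp υ) ∧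
        (∀ u v : C(Y, ℝ), (u + v).comp υ = u.comp υ + v.comp υ) ∧
        (∀ u v : C(Y, ℝ), (u * v).comp υ = u.comp υ * v.comp υ) ∧
        ((1 : C(Y, ℝ)).comp υ = 1) ∧
        (∀ (c : ℝ) (u : C(Y, ℝ)), (c • u).comp υ = c • u.comp υ) ∧
        (∀ u v : C(Y, ℝ), (u ⊔ v).comp υ = u.comp υ ⊔ v.comp υ)) ∧
      (∀ (Y' : Type u) (_ : TopologicalSpace Y'), Realcompact Y' →
        (∃ υ' : C(X, Y'), IsEmbedding (υ' : X → Y') ∧ Dense (Set.range υ') ∧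
          CEmbedded (Set.range υ') ∧ Bijective (fun u : C(Y', ℝ) => u.comp υ')) →
        Nonempty (Y' ≃ₜ Y)) := by
  classical
  set e := hewittCan X with he
  set K : Set (C(X, ℝ) → ℝ) := closure (Set.range e) with hK
  refine ⟨↥K, inferInstance, ⟨C(X, ℝ), K, isClosed_closure, ⟨Homeomorph.refl _⟩⟩, ?_, ?_⟩
  · -- existence part
    set υ : C(X, ↥K) := ⟨fun x => ⟨e x, subset_closure (mem_range_self x)⟩,
      (continuous_hewittCan X).subtype_mk _⟩ with hυ
    have hcomp : (Subtype.val : K → _) ∘ υ = e := rfl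
    have hembυ : IsEmbedding (υ : X → ↥K) := by
      refine IsEmbedding.of_comp υ.continuous continuous_subtype_val ?_
      rw [hcomp]; exact isEmbedding_hewittCan X
    have hdense : Dense (Set.range υ) := by
      intro y
      rw [closure_subtype]
      have : (Subtype.val : K → _) '' Set.range υ = Set.range e := by
        rw [← Set.range_comp, hcomp]
      rw [this]
      exact y.2
    -- surjectivity witness
    have hsurj : ∀ h : C(X, ℝ), ∃ u : C(↥K, ℝ), u.comp υ = h := by
      intro h
      refine ⟨⟨fun y => (y : C(X, ℝ) → ℝ) h,
        (continuous_apply h).comp continuous_subtype_val⟩, ?_⟩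
      ext x; rfl
    refine ⟨υ, hembυ, hdense, ?_, ⟨?_, fun h => ?_⟩, ?_, ?_, ?_, ?_, ?_⟩
    · -- C-embedded
      intro f
      set j : C(X, ↥(Set.range υ)) := ⟨fun x => ⟨υ x, mem_range_self x⟩,
        υ.continuous.subtype_mk _⟩ with hj
      obtain ⟨u, hu⟩ := hsurj (f.comp j)
      refine ⟨u, ?_⟩
      rintro ⟨y, x, rfl⟩
      have := congrFun (congrArg (fun (k : C(X,ℝ)) => (k : X → ℝ)) hu) x
      exact this
    · -- injective
      intro u v huv
      have h1 : (u : ↥K → ℝ) ∘ υ = (v : ↥K → ℝ) ∘ υ := by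
        ext x
        exact congrFun (congrArg (fun (k : C(X,ℝ)) => (k : X → ℝ)) huv) x
      have hdr : DenseRange (υ : X → ↥K) := hdense
      have := hdr.equalizer u.continuous v.continuous h1
      exact ContinuousMap.ext fun y => congrFun this y
    · exact hsurj h
    · intro u v; ext x; rfl
    · intro u v; ext x; rfl
    · ext x; rfl
    · intro c u; ext x; rfl
    · intro u v; ext x
      simp [ContinuousMap.comp_apply, ContinuousMap.sup_apply]
  · -- uniqueness part
    rintro Y' tY' ⟨ι, s, hs_closed, ⟨h⟩⟩ ⟨υ', hemb', hdense', hC', hbij'⟩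
    set Φ : C(Y', ℝ) ≃ C(X, ℝ) := Equiv.ofBijective _ hbij' with hΦ
    have hΦ_apply : ∀ u : C(Y', ℝ), Φ u = u.comp υ' := fun u => rfl
    set E : Y' → (C(X, ℝ) → ℝ) := fun y f => Φ.symm f y with hE
    have hEcont : Continuous E := continuous_pi fun f => (Φ.symm f).continuous
    have hEυ' : E ∘ υ' = e := by
      funext x
      funext f
      have : (Φ.symm f).comp υ' = f := Φ.apply_symm_apply f
      exact congrFun (congrArg (fun (k : C(X,ℝ)) => (k : X → ℝ)) this) x
    -- the coordinate functions coming from the realcompact structure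
    set q : ι → C(Y', ℝ) := fun i => ⟨fun y => (h y : ι → ℝ) i,
      (continuous_apply i).comp (continuous_subtype_val.comp h.continuous)⟩ with hq
    set π : (C(X, ℝ) → ℝ) → (ι → ℝ) := fun z i => z ((q i).comp υ') with hπ
    have hπcont : Continuous π := continuous_pi fun i => continuous_apply _
    have hπE : π ∘ E = (Subtype.val : s → _) ∘ h := by
      funext y
      funext i
      show Φ.symm ((q i).comp υ') y = (h y : ι → ℝ) i
      rw [← hΦ_apply, Φ.symm_apply_apply]
      rfl
    have hEemb : IsEmbedding E := by
      refine IsEmbedding.of_comp hEcont hπcont ?_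
      rw [hπE]
      exact IsEmbedding.subtypeVal.comp h.isEmbedding
    -- range E = K
    have hrange_sub : Set.range E ⊆ K := by
      have h1 : Set.range E = E '' closure (Set.range υ') := by
        rw [hdense'.closure_eq, Set.image_univ]
      rw [h1]
      refine (image_closure_subset_closure_image hEcont).trans ?_
      rw [← Set.range_comp, hEυ']
    have hrange_closed : IsClosed (Set.range E) := by
      rw [← closure_eq_iff_isClosed]
      refine subset_antisymm ?_ subset_closure
      intro z hz
      set L : Filter Y' := Filter.comap E (𝓝 z) with hL
      have hLne : L.NeBot := by
        rw [hL, comap_neBot_iff]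
        intro t ht
        obtain ⟨w, hwt, y, rfl⟩ := mem_closure_iff_nhds.1 hz t ht
        exact ⟨y, hwt⟩
      have hcoord : ∀ u : C(Y', ℝ), Tendsto u L (𝓝 (z (u.comp υ'))) := by
        intro u
        have h1 : Tendsto (fun y => E y (u.comp υ')) L (𝓝 (z (u.comp υ'))) :=
          ((continuous_apply (u.comp υ')).tendsto z).comp tendsto_comap
        have h2 : (fun y => E y (u.comp υ')) = u := by
          funext y
          show Φ.symm (u.comp υ') y = u y
          rw [← hΦ_apply, Φ.symm_apply_apply]
        rwa [h2] at h1
      set w : ι → ℝ := fun i => z ((q i).comp υ') with hw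
      have hwtend : Tendsto (fun y => (h y : ι → ℝ)) L (𝓝 w) := by
        rw [tendsto_pi_nhds]
        intro i
        exact hcoord (q i)
      have hws : w ∈ s :=
        hs_closed.mem_of_tendsto hwtend (Eventually.of_forall fun y => (h y).2)
      set y0 : Y' := h.symm ⟨w, hws⟩ with hy0
      have htend_s : Tendsto h L (𝓝 (⟨w, hws⟩ : s)) := by
        rw [IsEmbedding.subtypeVal.tendsto_nhds_iff]
        exact hwtend
      have hLy0 : Tendsto id L (𝓝 y0) := by
        have := (h.symm.continuous.tendsto _).comp htend_s
        simpa [hy0] using this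
      have hval : ∀ u : C(Y', ℝ), u y0 = z (u.comp υ') := by
        intro u
        exact tendsto_nhds_unique ((u.continuous.tendsto y0).comp hLy0) (hcoord u)
      refine ⟨y0, ?_⟩
      funext f
      show Φ.symm f y0 = z f
      rw [hval (Φ.symm f), ← hΦ_apply, Φ.apply_symm_apply]
    have hrange : Set.range E = K := by
      refine subset_antisymm hrange_sub ?_
      rw [hK, ← hrange_closed.closure_eq]
      refine closure_mono ?_
      rw [← hEυ', Set.range_comp]
      exact Set.image_subset_range _ _
    exact ⟨(hEemb.toHomeomorph).trans (Homeomorph.setCongr hrange)⟩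
end

section
/- If X and Y are realcompact spaces and there exists a ring isomorphism between C(X) and C(Y), then X and Y are homeomorphic. -/
open Function Topology

set_option maxHeartbeats 1000000
set_option synthInstance.maxHeartbeats 400000

/-- The `i`-th coordinate function on a subset of `ι → ℝ`. -/
noncomputable def coordFn {ι : Type u} (s : Set (ι → ℝ)) (i : ι) : C(s, ℝ) :=
  ⟨fun p => (p : ι → ℝ) i, (continuous_apply i).comp continuous_subtype_val⟩

/-- Evaluation at a point as a ring hom. -/
def evalHom {Z : Type*} [TopologicalSpace Z] (p : Z) : C(Z, ℝ) →+* ℝ where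
  toFun f := f p
  map_one' := rfl
  map_mul' _ _ := rfl
  map_zero' := rfl
  map_add' _ _ := rfl

lemma phi_ne_zero_of_bdd_below {ι : Type u} {s : Set (ι → ℝ)} (φ : C(s, ℝ) →+* ℝ)
    (h : C(s, ℝ)) (c : ℝ) (hc : 0 < c) (hb : ∀ p : s, c ≤ h p) : φ h ≠ 0 := by
  intro h0
  have hne : ∀ p : s, h p ≠ 0 := fun p => (hc.trans_le (hb p)).ne'
  let k : C(s, ℝ) := ⟨fun p => (h p)⁻¹, h.continuous.inv₀ hne⟩
  have hk : h * k = 1 := by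
    ext p
    simp [k, mul_inv_cancel₀ (hne p)]
  have := congrArg φ hk
  rw [map_mul, map_one, h0, zero_mul] at this
  exact zero_ne_one this

lemma lemC {ι : Type u} {s : Set (ι → ℝ)} (φ : C(s, ℝ) →+* ℝ)
    (hconst : ∀ c : ℝ, φ (ContinuousMap.const s c) = c)
    (x0 : ι → ℝ) (hx0 : ∀ i, φ (coordFn s i) = x0 i)
    (g : C(s, ℝ)) (hg : φ g = 0)
    (O : Set (ι → ℝ)) (hO : IsOpen O) (hxO : x0 ∈ O) (δ : ℝ) (hδ : 0 < δ)
    (hb : ∀ p : s, (p : ι → ℝ) ∈ O → δ ≤ |g p|) : False := by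
  obtain ⟨I, u, hu, hsub⟩ := isOpen_pi_iff.mp hO x0 hxO
  choose ε hε hball using fun (i : I) =>
    Metric.isOpen_iff.mp (hu i i.2).1 (x0 i) (hu i i.2).2
  set h : C(s, ℝ) :=
      g ^ 2 + ∑ i ∈ I.attach,
        (coordFn s i - ContinuousMap.const s (x0 i)) ^ 2
          * ContinuousMap.const s (δ ^ 2 / ε i ^ 2) with hh
  have hφh : φ h = 0 := by
    rw [hh, map_add, map_sum, map_pow, hg]
    rw [zero_pow (by norm_num), zero_add]
    refine Finset.sum_eq_zero fun i _ => ?_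
    rw [map_mul, map_pow, map_sub, hx0, hconst, sub_self]
    rw [zero_pow (by norm_num), zero_mul]
  have hbd : ∀ p : s, δ ^ 2 ≤ h p := by
    intro p
    have hpv : h p = (g p) ^ 2 +
        ∑ i ∈ I.attach, ((p : ι → ℝ) (i : ι) - x0 (i : ι)) ^ 2 * (δ ^ 2 / ε i ^ 2) := by
      rw [hh]
      rw [ContinuousMap.add_apply, ContinuousMap.pow_apply, ContinuousMap.sum_apply]
      congr 1
    rw [hpv]
    have hterm : ∀ i ∈ I.attach,
        (0:ℝ) ≤ ((p : ι → ℝ) (i : ι) - x0 (i : ι)) ^ 2 * (δ ^ 2 / ε i ^ 2) := by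
      intro i _
      have : (0:ℝ) ≤ δ ^ 2 / ε i ^ 2 := by positivity
      exact mul_nonneg (sq_nonneg _) this
    by_cases hp : (p : ι → ℝ) ∈ (I : Set ι).pi u
    · have h1 : δ ≤ |g p| := hb p (hsub hp)
      have h2 : δ ^ 2 ≤ (g p) ^ 2 := by
        rw [← sq_abs (g p)]
        exact pow_le_pow_left₀ hδ.le h1 2
      have h3 : (0:ℝ) ≤ ∑ i ∈ I.attach,
          ((p : ι → ℝ) (i : ι) - x0 (i : ι)) ^ 2 * (δ ^ 2 / ε i ^ 2) :=
        Finset.sum_nonneg hterm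
      linarith
    · rw [Set.mem_pi] at hp
      push_neg at hp
      obtain ⟨i, hiI0, hiu⟩ := hp
      have hiI : i ∈ I := Finset.mem_coe.mp hiI0
      have hnball : (p : ι → ℝ) i ∉ Metric.ball (x0 i) (ε ⟨i, hiI⟩) :=
        fun hmem => hiu (hball ⟨i, hiI⟩ hmem)
      rw [Metric.mem_ball, not_lt] at hnball
      have hdist : ε ⟨i, hiI⟩ ≤ |(p : ι → ℝ) i - x0 i| := by
        rwa [Real.dist_eq] at hnball
      have hεpos := hε ⟨i, hiI⟩
      have hterm_i : δ ^ 2 ≤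
          ((p : ι → ℝ) i - x0 i) ^ 2 * (δ ^ 2 / ε ⟨i, hiI⟩ ^ 2) := by
        have h2 : ε ⟨i, hiI⟩ ^ 2 ≤ ((p : ι → ℝ) i - x0 i) ^ 2 := by
          rw [← sq_abs (((p : ι → ℝ) i - x0 i))]
          exact pow_le_pow_left₀ hεpos.le hdist 2
        calc δ ^ 2 = ε ⟨i, hiI⟩ ^ 2 * (δ ^ 2 / ε ⟨i, hiI⟩ ^ 2) := by
              field_simp
          _ ≤ ((p : ι → ℝ) i - x0 i) ^ 2 * (δ ^ 2 / ε ⟨i, hiI⟩ ^ 2) :=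
              mul_le_mul_of_nonneg_right h2 (by positivity)
      have hsingle : δ ^ 2 ≤ ∑ j ∈ I.attach,
          ((p : ι → ℝ) (j : ι) - x0 (j : ι)) ^ 2 * (δ ^ 2 / ε j ^ 2) :=
        le_trans hterm_i (Finset.single_le_sum hterm (Finset.mem_attach _ ⟨i, hiI⟩))
      nlinarith [sq_nonneg (g p)]
  exact phi_ne_zero_of_bdd_below φ h (δ ^ 2) (by positivity) hbd hφh

lemma evalPoint {ι : Type u} {s : Set (ι → ℝ)} (hs : IsClosed s) (φ : C(s, ℝ) →+* ℝ) :
    ∃ x : s, ∀ f : C(s, ℝ), φ f = f x := by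
  have hconst : ∀ c : ℝ, φ (ContinuousMap.const s c) = c := by
    intro c
    have : φ.comp (algebraMap ℝ C(s, ℝ)) = RingHom.id ℝ := Subsingleton.elim _ _
    have h2 := congrArg (fun ψ => ψ c) this
    have h3 : (algebraMap ℝ C(s, ℝ)) c = ContinuousMap.const s c := rfl
    rw [← h3]
    exact h2
  set x0 : ι → ℝ := fun i => φ (coordFn s i) with hx0def
  have hx0 : ∀ i, φ (coordFn s i) = x0 i := fun i => rfl
  have hx : x0 ∈ s := by
    by_contra hx
    exact lemC φ hconst x0 hx0 0 (map_zero φ) sᶜ hs.isOpen_compl hx 1 one_pos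
      (fun p hp => absurd p.2 hp)
  refine ⟨⟨x0, hx⟩, fun f => ?_⟩
  by_contra hne
  set g : C(s, ℝ) := f - ContinuousMap.const s (φ f) with hgdef
  have hg : φ g = 0 := by rw [hgdef, map_sub, hconst, sub_self]
  have hgx : g ⟨x0, hx⟩ ≠ 0 := by
    simp only [hgdef, ContinuousMap.sub_apply, ContinuousMap.const_apply]
    intro h0
    exact hne (by linarith [sub_eq_zero.mp h0])
  set δ : ℝ := |g ⟨x0, hx⟩| / 2 with hδdef
  have hδ : 0 < δ := by positivity
  have hVopen : IsOpen {p : s | δ < |g p|} := by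
    have : Continuous fun p : s => |g p| := g.continuous.abs
    exact isOpen_Ioi.preimage this
  obtain ⟨O, hO, hOV⟩ := isOpen_induced_iff.mp hVopen
  have hxO : x0 ∈ O := by
    have : (⟨x0, hx⟩ : s) ∈ {p : s | δ < |g p|} := by
      simp only [Set.mem_setOf_eq, hδdef]
      exact half_lt_self (abs_pos.mpr hgx)
    rw [← hOV] at this
    exact this
  refine lemC φ hconst x0 hx0 g hg O hO hxO δ hδ fun p hp => ?_
  have : p ∈ {p : s | δ < |g p|} := by rw [← hOV]; exact hp
  exact le_of_lt this

/-- Points with the same evaluations on all continuous functions coincide. -/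
lemma eq_of_forall_eval {ι : Type u} {s : Set (ι → ℝ)} {p q : s}
    (h : ∀ f : C(s, ℝ), f p = f q) : p = q := by
  apply Subtype.ext
  funext i
  exact h (coordFn s i)

lemma key {ι κ : Type u} {s : Set (ι → ℝ)} {t : Set (κ → ℝ)}
    (hs : IsClosed s) (ht : IsClosed t) (Φ : C(s, ℝ) ≃+* C(t, ℝ)) :
    Nonempty (s ≃ₜ t) := by
  have hσ := fun y : t => evalPoint hs ((evalHom y).comp Φ.toRingHom)
  have hτ := fun x : s => evalPoint ht ((evalHom x).comp Φ.symm.toRingHom)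
  choose σ hσ using hσ
  choose τ hτ using hτ
  -- hσ y f : Φ f y = f (σ y);  hτ x g : Φ.symm g x = g (τ x)
  have hσ' : ∀ (y : t) (f : C(s, ℝ)), Φ f y = f (σ y) := fun y f => hσ y f
  have hτ' : ∀ (x : s) (g : C(t, ℝ)), Φ.symm g x = g (τ x) := fun x g => hτ x g
  have linv : ∀ y : t, τ (σ y) = y := by
    intro y
    refine (eq_of_forall_eval fun g => ?_).symm
    calc g y = Φ (Φ.symm g) y := by rw [Φ.apply_symm_apply]
      _ = Φ.symm g (σ y) := hσ' y (Φ.symm g)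
      _ = g (τ (σ y)) := hτ' (σ y) g
  have rinv : ∀ x : s, σ (τ x) = x := by
    intro x
    refine (eq_of_forall_eval fun f => ?_).symm
    calc f x = Φ.symm (Φ f) x := by rw [Φ.symm_apply_apply]
      _ = Φ f (τ x) := hτ' x (Φ f)
      _ = f (σ (τ x)) := hσ' (τ x) f
  have contσ : Continuous σ := by
    apply Continuous.subtype_mk
    apply continuous_pi
    intro i
    have : (fun y : t => (σ y : ι → ℝ) i) = fun y : t => Φ (coordFn s i) y := by
      funext y
      exact (hσ' y (coordFn s i)).symm
    rw [this]
    exact (Φ (coordFn s i)).continuous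
  have contτ : Continuous τ := by
    apply Continuous.subtype_mk
    apply continuous_pi
    intro j
    have : (fun x : s => (τ x : κ → ℝ) j) = fun x : s => Φ.symm (coordFn t j) x := by
      funext x
      exact (hτ' x (coordFn t j)).symm
    rw [this]
    exact (Φ.symm (coordFn t j)).continuous
  exact ⟨(Homeomorph.mk ⟨σ, τ, linv, rinv⟩ contσ contτ).symm⟩

/-- Precomposition with a homeomorphism gives a ring equivalence of function rings. -/
def compRingEquiv {X Z : Type*} [TopologicalSpace X] [TopologicalSpace Z] (e : X ≃ₜ Z) :
    C(Z, ℝ) ≃+* C(X, ℝ) where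
  toFun f := f.comp (e : C(X, Z))
  invFun f := f.comp (e.symm : C(Z, X))
  left_inv f := by ext p; simp
  right_inv f := by ext p; simp
  map_mul' f g := rfl
  map_add' f g := rfl

/-- If `X` and `Y` are realcompact spaces and `C(X)` and `C(Y)` are
isomorphic as rings, then `X` and `Y` are homeomorphic. -/
theorem homeomorphic_of_ringEquiv (X Y : Type u) [TopologicalSpace X] [TopologicalSpace Y]
    (hX : Realcompact X) (hY : Realcompact Y)
    (h : Nonempty (C(X, ℝ) ≃+* C(Y, ℝ))) : Nonempty (X ≃ₜ Y) := by
  obtain ⟨ι, s, hs, ⟨eX⟩⟩ := hX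
  obtain ⟨κ, t, ht, ⟨eY⟩⟩ := hY
  obtain ⟨ψ⟩ := h
  have Φ : C(s, ℝ) ≃+* C(t, ℝ) :=
    ((compRingEquiv eX).trans ψ).trans (compRingEquiv eY).symm
  obtain ⟨e0⟩ := key hs ht Φ
  exact ⟨eX.trans (e0.trans eY.symm)⟩
end

section
/- If X and Y are realcompact spaces and there exists a vector lattice isomorphism between C(X) and C(Y) (a linear bijection T such that both T and T⁻¹ are positive), then X and Y are homeomorphic. -/
open Function Topology

universe u

section RieszBasics

variable {X : Type u} [TopologicalSpace X]

lemma riesz_mono (φ : C(X,ℝ) →ₗ[ℝ] ℝ)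
    (hmin : ∀ f g : C(X,ℝ), φ (f ⊓ g) = min (φ f) (φ g))
    {f g : C(X,ℝ)} (h : f ≤ g) : φ f ≤ φ g := by
  have h1 := hmin f g
  rw [inf_eq_left.mpr h] at h1
  exact h1.le.trans (min_le_right _ _)

lemma riesz_sup (φ : C(X,ℝ) →ₗ[ℝ] ℝ)
    (hmin : ∀ f g : C(X,ℝ), φ (f ⊓ g) = min (φ f) (φ g))
    (f g : C(X,ℝ)) : φ (f ⊔ g) = max (φ f) (φ g) := by
  have key : f ⊔ g = -(-f ⊓ -g) := by
    ext x
    simp only [ContinuousMap.sup_apply, ContinuousMap.inf_apply, ContinuousMap.neg_apply]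
    rw [min_neg_neg, neg_neg]
  rw [key, map_neg, hmin, map_neg, map_neg, min_neg_neg, neg_neg]

end RieszBasics

section RieszZero

variable {X : Type u} [TopologicalSpace X]

/-- The continuous function `x ↦ ∑' n, max (f x - n) 0`. -/
lemma tsum_cut_continuous (f : C(X,ℝ)) :
    Continuous fun x => ∑' n : ℕ, max (f x - n) 0 := by
  rw [continuous_iff_continuousAt]
  intro x₀
  obtain ⟨N, hN⟩ := exists_nat_gt (f x₀)
  have hfin : Continuous fun x => ∑ n ∈ Finset.range N, max (f x - n) 0 :=
    continuous_finset_sum _ fun n _ => (f.continuous.sub continuous_const).max continuous_const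
  refine hfin.continuousAt.congr ?_
  have hU : {x | f x < N} ∈ nhds x₀ :=
    (isOpen_lt f.continuous continuous_const).mem_nhds hN
  filter_upwards [hU] with x hx
  refine (tsum_eq_sum fun n hn => ?_).symm
  have hn' : (N : ℝ) ≤ n := by
    exact_mod_cast le_of_not_gt fun h => hn (Finset.mem_range.mpr h)
  have : f x - n ≤ 0 := by linarith
  simp [max_eq_right this]

lemma riesz_zero (φ : C(X,ℝ) →ₗ[ℝ] ℝ)
    (hmin : ∀ f g : C(X,ℝ), φ (f ⊓ g) = min (φ f) (φ g))
    (h1 : φ 1 = 0) : ∀ f, φ f = 0 := by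
  have hpos : ∀ f : C(X,ℝ), 0 ≤ f → φ f = 0 := by
    intro f hf
    have hc0 : 0 ≤ φ f := by
      have := riesz_mono φ hmin hf
      simpa using this
    rcases eq_or_lt_of_le hc0 with h | hc
    · exact h.symm
    exfalso
    set c := φ f with hcdef
    -- the continuous function ∑' n, (f - n)⁺
    set G : C(X,ℝ) := ⟨fun x => ∑' n : ℕ, max (f x - n) 0, tsum_cut_continuous f⟩ with hG
    have hsummable : ∀ x : X, Summable fun n : ℕ => max (f x - n) 0 := by
      intro x
      obtain ⟨N, hN⟩ := exists_nat_gt (f x)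
      refine summable_of_ne_finset_zero (s := Finset.range N) fun n hn => ?_
      have hn' : (N : ℝ) ≤ (n : ℝ) := by
        exact_mod_cast le_of_not_gt fun h => hn (Finset.mem_range.mpr h)
      have : f x - n ≤ 0 := by linarith
      simp [max_eq_right this]
    have hub : ∀ N : ℕ, (N : ℝ) * c ≤ φ G := by
      intro N
      set S : C(X,ℝ) := ∑ n ∈ Finset.range N, ((f - (n:ℝ) • 1) ⊔ 0) with hS
      have hφS : φ S = N * c := by
        rw [hS, map_sum]
        have : ∀ n ∈ Finset.range N, φ ((f - (n:ℝ) • 1) ⊔ 0) = c := by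
          intro n _
          rw [riesz_sup φ hmin, map_sub, map_smul, h1, map_zero]
          simp [hcdef, max_eq_left hc0]
          exact hc0
        rw [Finset.sum_congr rfl this]
        simp [mul_comm]
      have hle : S ≤ G := by
        rw [ContinuousMap.le_def]
        intro x
        have hSx : S x = ∑ n ∈ Finset.range N, max (f x - n) 0 := by
          rw [hS]
          simp [ContinuousMap.sup_apply, ContinuousMap.smul_apply]
        rw [hSx]
        exact (hsummable x).sum_le_tsum _ (fun n _ => le_max_right _ _)
      rw [← hφS]
      exact riesz_mono φ hmin hle
    obtain ⟨N, hN⟩ := exists_nat_gt (φ G / c)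
    have := hub N
    rw [div_lt_iff₀ hc] at hN
    linarith
  intro f
  have h2 := hpos (f ⊔ 0) le_sup_right
  have h3 := hpos ((-f) ⊔ 0) le_sup_right
  rw [riesz_sup φ hmin, map_zero] at h2 h3
  rw [map_neg] at h3
  nlinarith [le_max_left (-φ f) (0:ℝ), le_max_left (φ f) (0:ℝ), h2, h3]

end RieszZero

section Eval

variable {X : Type u} [TopologicalSpace X]

lemma finset_eps {ι : Type*} (I : Finset ι) (u : ι → Set ℝ) (p : ι → ℝ)
    (hu : ∀ i ∈ I, IsOpen (u i) ∧ p i ∈ u i) :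
    ∃ ε > (0:ℝ), ∀ i ∈ I, Metric.ball (p i) ε ⊆ u i := by
  rcases I.eq_empty_or_nonempty with hI | hI
  · exact ⟨1, one_pos, by simp [hI]⟩
  have hball : ∀ i ∈ I, ∃ ε > (0:ℝ), Metric.ball (p i) ε ⊆ u i := fun i hi =>
    Metric.isOpen_iff.mp (hu i hi).1 _ (hu i hi).2
  choose! εf hεf hεb using hball
  refine ⟨I.inf' hI εf, ?_, ?_⟩
  · exact (Finset.lt_inf'_iff hI).mpr fun i hi => hεf i hi
  · intro i hi
    exact (Metric.ball_subset_ball (Finset.inf'_le _ hi)).trans (hεb i hi)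

lemma riesz_eval (hX : Realcompact X)
    (φ : C(X,ℝ) →ₗ[ℝ] ℝ) (hmin : ∀ f g : C(X,ℝ), φ (f ⊓ g) = min (φ f) (φ g))
    (h1 : φ 1 = 1) : ∃ x₀ : X, ∀ f, φ f = f x₀ := by
  obtain ⟨ι, s, hs, ⟨e⟩⟩ := hX
  set π : ι → C(X,ℝ) := fun i =>
    ⟨fun x => (e x : ι → ℝ) i, (continuous_apply i).comp (continuous_subtype_val.comp e.continuous)⟩
    with hπdef
  set p : ι → ℝ := fun i => φ (π i) with hpdef
  -- the absolute value helper
  have habs : ∀ (g : C(X,ℝ)) (x : X), (g ⊔ (-g)) x = |g x| := by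
    intro g x
    simp [ContinuousMap.sup_apply, abs_eq_max_neg]
  have hφabs : ∀ g : C(X,ℝ), φ (g ⊔ (-g)) = |φ g| := by
    intro g
    rw [riesz_sup φ hmin, map_neg]
    rfl
  -- Step 1 : p ∈ s
  have hps : p ∈ s := by
    by_contra hps
    obtain ⟨I, u, hu, hsub⟩ := isOpen_pi_iff.mp hs.isOpen_compl p hps
    obtain ⟨ε, hε, hball⟩ := finset_eps I u p hu
    set h : C(X,ℝ) := ∑ i ∈ I, (((π i - p i • 1) ⊔ (-(π i - p i • 1))) ⊓ 1) with hh
    have hφh : φ h = 0 := by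
      rw [hh, map_sum]
      refine Finset.sum_eq_zero fun i hi => ?_
      rw [hmin, hφabs, map_sub, map_smul, h1]
      simp [hpdef]
    have hterm_nonneg : ∀ (i : ι) (x : X),
        0 ≤ (((π i - p i • 1) ⊔ (-(π i - p i • 1))) ⊓ 1) x := by
      intro i x
      simp only [ContinuousMap.inf_apply, ContinuousMap.one_apply, habs]
      exact le_min (abs_nonneg _) one_pos.le
    have hlb : (min ε 1) • (1 : C(X,ℝ)) ≤ h := by
      rw [ContinuousMap.le_def]
      intro x
      have hmem : (e x : ι → ℝ) ∉ (I : Set ι).pi u := fun hm => hsub hm (e x).2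
      rw [Set.mem_pi] at hmem
      push_neg at hmem
      obtain ⟨i, hi, hiu⟩ := hmem
      have hdist : ε ≤ |π i x - p i| := by
        have : (e x : ι → ℝ) i ∉ Metric.ball (p i) ε := fun hb => hiu (hball i hi hb)
        rw [Metric.mem_ball, Real.dist_eq, not_lt] at this
        simpa [hπdef] using this
      have hterm : min ε 1 ≤ (((π i - p i • 1) ⊔ (-(π i - p i • 1))) ⊓ 1) x := by
        simp only [ContinuousMap.inf_apply, ContinuousMap.one_apply, habs,
          ContinuousMap.sub_apply, ContinuousMap.smul_apply, smul_eq_mul, mul_one]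
        exact min_le_min (by simpa using hdist) le_rfl
      calc (min ε 1 • (1:C(X,ℝ))) x = min ε 1 := by simp
        _ ≤ (((π i - p i • 1) ⊔ (-(π i - p i • 1))) ⊓ 1) x := hterm
        _ ≤ h x := by
            rw [hh]
            rw [ContinuousMap.sum_apply]
            exact Finset.single_le_sum (fun j _ => hterm_nonneg j x) hi
    have hcontra := riesz_mono φ hmin hlb
    rw [map_smul, h1, hφh, smul_eq_mul, mul_one] at hcontra
    have : 0 < min ε 1 := lt_min hε one_pos
    linarith
  set x₀ : X := e.symm ⟨p, hps⟩ with hx₀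
  have hπx₀ : ∀ i, π i x₀ = p i := by
    intro i
    simp [hπdef, hx₀]
  refine ⟨x₀, ?_⟩
  -- Step 2
  suffices hle : ∀ f : C(X,ℝ), φ f ≤ f x₀ by
    intro f
    have h2 := hle (-f)
    rw [map_neg, ContinuousMap.neg_apply] at h2
    linarith [hle f]
  intro f
  by_contra hgt
  push_neg at hgt
  set c := f x₀ with hcdef
  set t := (φ f + c)/2 with htdef
  set a := c - 1 with hadef
  have hct : c < t := by rw [htdef]; linarith
  have htφ : t < φ f := by rw [htdef]; linarith
  have hat : a ≤ t := by rw [hadef]; linarith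
  set g : C(X,ℝ) := (f ⊔ a • 1) ⊓ t • 1 with hgdef
  have hφa1 : φ (a • (1:C(X,ℝ))) = a := by rw [map_smul, h1, smul_eq_mul, mul_one]
  have hφt1 : φ (t • (1:C(X,ℝ))) = t := by rw [map_smul, h1, smul_eq_mul, mul_one]
  have hφg : φ g = t := by
    rw [hgdef, hmin, riesz_sup φ hmin, hφa1, hφt1]
    rw [max_eq_left (by linarith : a ≤ φ f), min_eq_right htφ.le]
  have hgx : ∀ x, g x = min (max (f x) a) t := by
    intro x
    rw [hgdef]
    simp only [ContinuousMap.inf_apply, ContinuousMap.sup_apply, ContinuousMap.smul_apply,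
      ContinuousMap.one_apply, smul_eq_mul, mul_one]
  have hgx₀ : g x₀ = c := by
    rw [hgx, max_eq_left (by rw [hadef]; linarith : a ≤ f x₀), min_eq_left hct.le]
  have hbound : ∀ x, a ≤ g x ∧ g x ≤ t := by
    intro x
    rw [hgx]
    exact ⟨le_min (le_max_right _ _) hat, min_le_right _ _⟩
  set h : C(X,ℝ) := (g - c • 1) ⊔ (-(g - c • 1)) with hh
  set d := t - c with hddef
  have hd : 0 < d := by rw [hddef]; linarith
  have hφh : φ h = d := by
    rw [hh, hφabs, map_sub, map_smul, h1, smul_eq_mul, mul_one, hφg, hddef,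
      abs_of_pos (by linarith)]
  have hhx : ∀ x, h x = |g x - c| := by
    intro x
    rw [hh, habs]
    simp
  have hhx₀ : h x₀ = 0 := by rw [hhx, hgx₀]; simp
  set M := t - a with hMdef
  have hM : 0 < M := by rw [hMdef]; linarith
  have hhM : ∀ x, h x ≤ M := by
    intro x
    rw [hhx, hMdef]
    have hb := hbound x
    have hac : a ≤ c := by rw [hadef]; linarith
    rw [abs_le]
    constructor <;> [linarith [hb.1]; linarith [hb.2]]
  have hhnonneg : ∀ x, 0 ≤ h x := fun x => by rw [hhx]; exact abs_nonneg _
  -- find an open set W in the product capturing {h < d/2}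
  have hq : Continuous fun z : s => h (e.symm z) := h.continuous.comp e.symm.continuous
  have hUopen : IsOpen ((fun z : s => h (e.symm z)) ⁻¹' Set.Iio (d/2)) :=
    hq.isOpen_preimage _ isOpen_Iio
  obtain ⟨W, hWopen, hWeq⟩ := isOpen_induced_iff.mp hUopen
  have hpW : p ∈ W := by
    have hmem : (⟨p, hps⟩ : s) ∈ Subtype.val ⁻¹' W := by
      rw [hWeq]
      show h (e.symm ⟨p, hps⟩) < d/2
      rw [← hx₀, hhx₀]
      linarith
    exact hmem
  obtain ⟨I, u, hu, hsub⟩ := isOpen_pi_iff.mp hWopen p hpW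
  obtain ⟨ε, hε, hball⟩ := finset_eps I u p hu
  set q' : C(X,ℝ) := ∑ i ∈ I, ((π i - p i • 1) ⊔ (-(π i - p i • 1))) with hq'def
  have hφq' : φ q' = 0 := by
    rw [hq'def, map_sum]
    refine Finset.sum_eq_zero fun i hi => ?_
    rw [hφabs, map_sub, map_smul, h1]
    simp [hpdef]
  have hq'x : ∀ x, q' x = ∑ i ∈ I, |π i x - p i| := by
    intro x
    rw [hq'def, ContinuousMap.sum_apply]
    refine Finset.sum_congr rfl fun i _ => ?_
    rw [habs]
    simp
  have hq'nonneg : ∀ x, 0 ≤ q' x := fun x => by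
    rw [hq'x]; exact Finset.sum_nonneg fun i _ => abs_nonneg _
  have hkey : h ≤ (d/2) • 1 + (M/ε) • q' := by
    rw [ContinuousMap.le_def]
    intro x
    have hrhs : ((d/2) • 1 + (M/ε) • q' : C(X,ℝ)) x = d/2 + (M/ε) * q' x := by
      simp
    rw [hrhs]
    by_cases hx : ∀ i ∈ I, |π i x - p i| < ε
    · have hmem : (e x : ι → ℝ) ∈ (I : Set ι).pi u := by
        intro i hi
        apply hball i hi
        rw [Metric.mem_ball, Real.dist_eq]
        simpa [hπdef] using hx i hi
      have hW' : (e x : ι → ℝ) ∈ W := hsub hmem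
      have hhx2 : h (e.symm (e x)) < d/2 := by
        have hmem2 : e x ∈ Subtype.val ⁻¹' W := hW'
        rw [hWeq] at hmem2
        exact hmem2
      rw [Homeomorph.symm_apply_apply] at hhx2
      have hnn : 0 ≤ (M/ε) * q' x := mul_nonneg (by positivity) (hq'nonneg x)
      linarith
    · push_neg at hx
      obtain ⟨i, hi, hix⟩ := hx
      have hq'big : ε ≤ q' x := by
        rw [hq'x]
        calc ε ≤ |π i x - p i| := hix
          _ ≤ ∑ j ∈ I, |π j x - p j| :=
              Finset.single_le_sum (f := fun j => |π j x - p j|) (fun j _ => abs_nonneg _) hi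
      have h1' : (M/ε) * ε ≤ (M/ε) * q' x :=
        mul_le_mul_of_nonneg_left hq'big (div_pos hM hε).le
      rw [div_mul_cancel₀ _ hε.ne'] at h1'
      linarith [hhM x]
  have hfinal := riesz_mono φ hmin hkey
  rw [hφh, map_add, map_smul, map_smul, h1, hφq', smul_eq_mul, smul_eq_mul, mul_one,
    mul_zero] at hfinal
  linarith

end Eval

section Main

variable {X Y : Type u} [TopologicalSpace X] [TopologicalSpace Y]

lemma sep_points (hX : Realcompact X) :
    ∀ x x' : X, (∀ f : C(X,ℝ), f x = f x') → x = x' := by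
  obtain ⟨ι, s, hs, ⟨e⟩⟩ := hX
  intro x x' h
  have : e x = e x' := by
    apply Subtype.ext
    funext i
    exact h ⟨fun z => (e z : ι → ℝ) i,
      (continuous_apply i).comp (continuous_subtype_val.comp e.continuous)⟩
  simpa using congrArg e.symm this

lemma weighted_comp (hX : Realcompact X)
    (T : C(X,ℝ) ≃ₗ[ℝ] C(Y,ℝ))
    (hT : ∀ u : C(X,ℝ), 0 ≤ u → 0 ≤ T u)
    (hT' : ∀ v : C(Y,ℝ), 0 ≤ v → 0 ≤ T.symm v) :
    ∃ τ : Y → X, Continuous τ ∧ (∀ y, 0 < T 1 y) ∧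
      ∀ (f : C(X,ℝ)) (y : Y), T f y = T 1 y * f (τ y) := by
  have hmonoT : ∀ {f g : C(X,ℝ)}, f ≤ g → T f ≤ T g := by
    intro f g h
    have h2 := hT (g - f) (by rwa [sub_nonneg])
    rw [map_sub] at h2
    rwa [← sub_nonneg]
  have hmonoT' : ∀ {f g : C(Y,ℝ)}, f ≤ g → T.symm f ≤ T.symm g := by
    intro f g h
    have h2 := hT' (g - f) (by rwa [sub_nonneg])
    rw [map_sub] at h2
    rwa [← sub_nonneg]
  have hinf : ∀ f g : C(X,ℝ), T (f ⊓ g) = T f ⊓ T g := by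
    intro f g
    refine le_antisymm (le_inf (hmonoT inf_le_left) (hmonoT inf_le_right)) ?_
    have h1 : T.symm (T f ⊓ T g) ≤ f ⊓ g := by
      refine le_inf ?_ ?_
      · have := hmonoT' (inf_le_left (a := T f) (b := T g))
        rwa [LinearEquiv.symm_apply_apply] at this
      · have := hmonoT' (inf_le_right (a := T f) (b := T g))
        rwa [LinearEquiv.symm_apply_apply] at this
    have h2 := hmonoT h1
    rwa [LinearEquiv.apply_symm_apply] at h2
  -- the evaluation functionals
  set E : Y → (C(X,ℝ) →ₗ[ℝ] ℝ) := fun y =>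
    { toFun := fun f => T f y
      map_add' := fun f g => by simp
      map_smul' := fun c f => by simp } with hE
  have hEmin : ∀ y (f g : C(X,ℝ)), E y (f ⊓ g) = min (E y f) (E y g) := by
    intro y f g
    show T (f ⊓ g) y = min (T f y) (T g y)
    rw [hinf]
    simp [ContinuousMap.inf_apply]
  have hv : ∀ y, 0 < T 1 y := by
    intro y
    have h0 : 0 ≤ T 1 y := by
      have := hT 1 zero_le_one
      exact ContinuousMap.le_def.mp this y
    rcases eq_or_lt_of_le h0 with h | h
    · exfalso
      have hz := riesz_zero (E y) (hEmin y) h.symm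
      have h1 := hz (T.symm 1)
      have : E y (T.symm 1) = (1 : ℝ) := by
        show T (T.symm 1) y = 1
        rw [LinearEquiv.apply_symm_apply]
        simp
      rw [h1] at this
      norm_num at this
    · exact h
  have hx : ∀ y : Y, ∃ x : X, ∀ f, T f y = T 1 y * f x := by
    intro y
    set ψ : C(X,ℝ) →ₗ[ℝ] ℝ := (T 1 y)⁻¹ • E y with hψ
    have hψmin : ∀ f g : C(X,ℝ), ψ (f ⊓ g) = min (ψ f) (ψ g) := by
      intro f g
      simp only [hψ, LinearMap.smul_apply, smul_eq_mul]
      rw [hEmin, mul_min_of_nonneg _ _ (inv_nonneg.mpr (hv y).le)]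
    have hψ1 : ψ 1 = 1 := by
      show (T 1 y)⁻¹ * E y 1 = 1
      show (T 1 y)⁻¹ * T 1 y = 1
      exact inv_mul_cancel₀ (hv y).ne'
    obtain ⟨x, hxeval⟩ := riesz_eval hX ψ hψmin hψ1
    refine ⟨x, fun f => ?_⟩
    have := hxeval f
    simp only [hψ, LinearMap.smul_apply, smul_eq_mul] at this
    have h2 : T 1 y * ((T 1 y)⁻¹ * E y f) = T 1 y * f x := by rw [this]
    rwa [← mul_assoc, mul_inv_cancel₀ (hv y).ne', one_mul] at h2
  choose τ hτ using hx
  refine ⟨τ, ?_, hv, fun f y => hτ y f⟩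
  -- continuity of τ
  obtain ⟨ι, s, hs, ⟨e⟩⟩ := hX
  have hcoord : ∀ i : ι, Continuous fun y => (e (τ y) : ι → ℝ) i := by
    intro i
    set π : C(X,ℝ) := ⟨fun z => (e z : ι → ℝ) i,
      (continuous_apply i).comp (continuous_subtype_val.comp e.continuous)⟩ with hπ
    have heq : ∀ y, (e (τ y) : ι → ℝ) i = (T 1 y)⁻¹ * T π y := by
      intro y
      have := hτ y π
      have hπτ : π (τ y) = (e (τ y) : ι → ℝ) i := rfl
      rw [hπτ] at this
      rw [this, ← mul_assoc, inv_mul_cancel₀ (hv y).ne', one_mul]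
    have : Continuous fun y => (T 1 y)⁻¹ * T π y :=
      (((T 1).continuous.inv₀ fun y => (hv y).ne')).mul (T π).continuous
    exact this.congr fun y => (heq y).symm
  have hcompcont : Continuous fun y => e (τ y) := by
    have : Continuous fun y => (e (τ y) : ι → ℝ) := continuous_pi hcoord
    exact this.subtype_mk _
  have : Continuous fun y => e.symm (e (τ y)) := e.symm.continuous.comp hcompcont
  simpa using this

end Main

/-- If `X` and `Y` are realcompact spaces and there is a vector lattice
isomorphism between `C(X)` and `C(Y)` (a linear bijection `T` such that both `T` and
`T⁻¹` are positive), then `X` and `Y` are homeomorphic. -/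
theorem homeomorphic_of_latticeIso (X Y : Type u) [TopologicalSpace X] [TopologicalSpace Y]
    (hX : Realcompact X) (hY : Realcompact Y)
    (T : C(X, ℝ) ≃ₗ[ℝ] C(Y, ℝ))
    (hT : ∀ u : C(X, ℝ), 0 ≤ u → 0 ≤ T u)
    (hT' : ∀ v : C(Y, ℝ), 0 ≤ v → 0 ≤ T.symm v) : Nonempty (X ≃ₜ Y) := by
  obtain ⟨τ, hτc, hv, hτ⟩ := weighted_comp hX T hT hT'
  obtain ⟨σ, hσc, hw, hσ⟩ := weighted_comp hY T.symm hT' (by simpa using hT)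
  have left_inv : ∀ x, τ (σ x) = x := by
    intro x
    have key : ∀ f : C(X,ℝ), f x = T.symm 1 x * (T 1 (σ x) * f (τ (σ x))) := by
      intro f
      have h1 : f x = T.symm (T f) x := by rw [LinearEquiv.symm_apply_apply]
      rw [h1, hσ (T f) x, hτ f (σ x)]
    have hone := key 1
    rw [ContinuousMap.one_apply, ContinuousMap.one_apply, mul_one] at hone
    apply sep_points hX (τ (σ x)) x
    intro f
    have := key f
    rw [← mul_assoc, ← hone, one_mul] at this
    exact this.symm
  have right_inv : ∀ y, σ (τ y) = y := by
    intro y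
    have key : ∀ g : C(Y,ℝ), g y = T 1 y * (T.symm 1 (τ y) * g (σ (τ y))) := by
      intro g
      have h1 : g y = T (T.symm g) y := by rw [LinearEquiv.apply_symm_apply]
      rw [h1, hτ (T.symm g) y, hσ g (τ y)]
    have hone := key 1
    rw [ContinuousMap.one_apply, ContinuousMap.one_apply, mul_one] at hone
    apply sep_points hY (σ (τ y)) y
    intro g
    have := key g
    rw [← mul_assoc, ← hone, one_mul] at this
    exact this.symm
  exact ⟨{ toFun := σ, invFun := τ, left_inv := fun x => left_inv x,
           right_inv := fun y => right_inv y,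
           continuous_toFun := hσc, continuous_invFun := hτc }⟩
end

section
/- For every topological space X there exist a realcompact space κX and a continuous map κ : X → κX whose image is a dense C-embedded subspace of κX, such that the map C(κX) → C(X), u ↦ u ∘ κ, is simultaneously a ring isomorphism and a vector lattice isomorphism. Moreover κX is unique up to homeomorphism. -/
open Function Topology

/-- The evaluation map `X → ℝ^{C(X,ℝ)}`. -/
def evMap (X : Type u) [TopologicalSpace X] : X → (C(X, ℝ) → ℝ) := fun x f => f x

lemma evMap_continuous (X : Type u) [TopologicalSpace X] : Continuous (evMap X) :=
  continuous_pi fun f => f.continuous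

/-- Closure of the range of the evaluation map. -/
def hewittSet (X : Type u) [TopologicalSpace X] : Set (C(X, ℝ) → ℝ) :=
  closure (Set.range (evMap X))

/-- The Hewitt realcompactification. -/
abbrev Hewitt (X : Type u) [TopologicalSpace X] : Type u := ↥(hewittSet X)

/-- The canonical map `X → Hewitt X`. -/
def hewittMap (X : Type u) [TopologicalSpace X] : C(X, Hewitt X) where
  toFun x := ⟨evMap X x, subset_closure (Set.mem_range_self x)⟩
  continuous_toFun := (evMap_continuous X).subtype_mk _

lemma coe_image_range_hewittMap (X : Type u) [TopologicalSpace X] :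
    (↑) '' (Set.range (hewittMap X)) = Set.range (evMap X) := by
  ext y
  constructor
  · rintro ⟨z, ⟨x, rfl⟩, rfl⟩; exact ⟨x, rfl⟩
  · rintro ⟨x, rfl⟩; exact ⟨hewittMap X x, ⟨x, rfl⟩, rfl⟩

lemma dense_range_hewittMap (X : Type u) [TopologicalSpace X] :
    Dense (Set.range (hewittMap X)) := by
  intro y
  rw [closure_subtype, coe_image_range_hewittMap]
  exact y.2

/-- Evaluation at a coordinate, as a continuous map on `Hewitt X`. -/
def hewittEval (X : Type u) [TopologicalSpace X] (f : C(X, ℝ)) : C(Hewitt X, ℝ) where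
  toFun y := y.val f
  continuous_toFun := (continuous_apply f).comp continuous_subtype_val

lemma hewittEval_comp (X : Type u) [TopologicalSpace X] (f : C(X, ℝ)) :
    (hewittEval X f).comp (hewittMap X) = f := by
  ext x; rfl

/-- For every topological space `X` there exist a realcompact space `κX`
and a continuous map `κ : X → κX` whose image is a dense C-embedded subspace of `κX`,
such that `C(κX) → C(X)`, `u ↦ u ∘ κ`, is simultaneously a ring isomorphism and a vector
lattice isomorphism.  Moreover `κX` is unique up to homeomorphism. -/
theorem realcompactification_arbitrary (X : Type u) [TopologicalSpace X] :
    ∃ (Y : Type u) (_ : TopologicalSpace Y), Realcompact Y ∧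
      (∃ κ : C(X, Y), Dense (Set.range κ) ∧ CEmbedded (Set.range κ) ∧
        Bijective (fun u : C(Y, ℝ) => u.comp κ) ∧
        (∀ u v : C(Y, ℝ), (u + v).comp κ = u.comp κ + v.comp κ) ∧
        (∀ u v : C(Y, ℝ), (u * v).comp κ = u.comp κ * v.comp κ) ∧
        ((1 : C(Y, ℝ)).comp κ = 1) ∧
        (∀ (c : ℝ) (u : C(Y, ℝ)), (c • u).comp κ = c • u.comp κ) ∧
        (∀ u v : C(Y, ℝ), (u ⊔ v).comp κ = u.comp κ ⊔ v.comp κ)) ∧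
      (∀ (Y' : Type u) (_ : TopologicalSpace Y'), Realcompact Y' →
        (∃ κ' : C(X, Y'), Dense (Set.range κ') ∧ CEmbedded (Set.range κ') ∧
          Bijective (fun u : C(Y', ℝ) => u.comp κ')) →
        Nonempty (Y' ≃ₜ Y)) := by
  refine ⟨Hewitt X, inferInstance, ?_, ⟨hewittMap X, dense_range_hewittMap X, ?_, ?_, ?_, ?_, ?_, ?_, ?_⟩, ?_⟩
  · -- realcompact
    exact ⟨C(X, ℝ), hewittSet X, isClosed_closure, ⟨Homeomorph.refl _⟩⟩
  · -- C-embedded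
    intro f
    have hcont : Continuous fun x : X => f ⟨hewittMap X x, Set.mem_range_self x⟩ :=
      f.continuous.comp (((hewittMap X).continuous).subtype_mk _)
    refine ⟨hewittEval X ⟨_, hcont⟩, ?_⟩
    rintro ⟨z, x, rfl⟩
    rfl
  · -- bijective
    constructor
    · intro u v huv
      ext y
      have : (u : Hewitt X → ℝ) = v :=
        Continuous.ext_on (dense_range_hewittMap X) u.continuous v.continuous
          (by rintro _ ⟨x, rfl⟩; exact ContinuousMap.congr_fun huv x)
      rw [this]
    · intro f
      exact ⟨hewittEval X f, hewittEval_comp X f⟩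
  · intro u v; ext x; rfl
  · intro u v; ext x; rfl
  · ext x; rfl
  · intro c u; ext x; rfl
  · intro u v; ext x; rfl
  · -- uniqueness
    rintro Y' _tY' ⟨ι', s', hs'closed, ⟨j⟩⟩ ⟨κ', hdense', _, hinj', hsurj'⟩
    haveI : T2Space Y' := j.isEmbedding.t2Space
    -- the map h : Y' → Hewitt X
    set u : C(X, ℝ) → C(Y', ℝ) := fun f => (hsurj' f).choose with hu
    have hu_spec : ∀ f : C(X, ℝ), (u f).comp κ' = f := fun f => (hsurj' f).choose_spec
    set h₀ : Y' → (C(X, ℝ) → ℝ) := fun y f => u f y with hh₀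
    have h₀cont : Continuous h₀ := continuous_pi fun f => (u f).continuous
    have h₀κ' : ∀ x : X, h₀ (κ' x) = evMap X x := by
      intro x; funext f
      exact ContinuousMap.congr_fun (hu_spec f) x
    have h₀mem : ∀ y : Y', h₀ y ∈ hewittSet X := by
      intro y
      have hy : y ∈ closure (Set.range κ') := hdense' y
      have : h₀ y ∈ closure (h₀ '' Set.range κ') :=
        image_closure_subset_closure_image h₀cont ⟨y, hy, rfl⟩
      refine closure_mono ?_ this
      rintro _ ⟨_, ⟨x, rfl⟩, rfl⟩
      exact ⟨x, (h₀κ' x).symm⟩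
    set h : Y' → Hewitt X := fun y => ⟨h₀ y, h₀mem y⟩ with hh
    have hcont : Continuous h := h₀cont.subtype_mk _
    -- the map g : Hewitt X → Y'
    set fcoord : ι' → C(X, ℝ) := fun i =>
      ⟨fun x => (j (κ' x)).val i,
        (continuous_apply i).comp (continuous_subtype_val.comp (j.continuous.comp κ'.continuous))⟩
      with hfcoord
    set g₀ : Hewitt X → (ι' → ℝ) := fun y i => y.val (fcoord i) with hg₀
    have g₀cont : Continuous g₀ :=
      continuous_pi fun i => (continuous_apply (fcoord i)).comp continuous_subtype_val
    have g₀κ : ∀ x : X, g₀ (hewittMap X x) = (j (κ' x)).val := by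
      intro x; funext i; rfl
    have g₀mem : ∀ y : Hewitt X, g₀ y ∈ s' := by
      intro y
      have hy : y ∈ closure (Set.range (hewittMap X)) := dense_range_hewittMap X y
      have h1 : g₀ y ∈ closure (g₀ '' Set.range (hewittMap X)) :=
        image_closure_subset_closure_image g₀cont ⟨y, hy, rfl⟩
      have h2 : g₀ '' Set.range (hewittMap X) ⊆ s' := by
        rintro _ ⟨_, ⟨x, rfl⟩, rfl⟩
        rw [g₀κ x]
        exact (j (κ' x)).2
      exact hs'closed.closure_subset (closure_mono h2 h1)
    set g : Hewitt X → Y' := fun y => j.symm ⟨g₀ y, g₀mem y⟩ with hg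
    have gcont : Continuous g := j.symm.continuous.comp (g₀cont.subtype_mk _)
    -- h (κ' x) = hewittMap X x and g (hewittMap X x) = κ' x
    have hκ' : ∀ x : X, h (κ' x) = hewittMap X x := fun x => Subtype.ext (h₀κ' x)
    have gκ : ∀ x : X, g (hewittMap X x) = κ' x := by
      intro x
      have : (⟨g₀ (hewittMap X x), g₀mem _⟩ : s') = j (κ' x) := Subtype.ext (g₀κ x)
      rw [hg]; dsimp only; rw [this, Homeomorph.symm_apply_apply]
    -- the two compositions are identity
    have hgh : g ∘ h = id := by
      apply Continuous.ext_on hdense' (gcont.comp hcont) continuous_id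
      rintro _ ⟨x, rfl⟩
      show g (h (κ' x)) = κ' x
      rw [hκ' x, gκ x]
    have hhg : h ∘ g = id := by
      apply Continuous.ext_on (dense_range_hewittMap X) (hcont.comp gcont) continuous_id
      rintro _ ⟨x, rfl⟩
      show h (g (hewittMap X x)) = hewittMap X x
      rw [gκ x, hκ' x]
    exact ⟨⟨⟨h, g, fun y => congrFun hgh y, fun y => congrFun hhg y⟩, hcont, gcont⟩⟩
end

section
/- Let X be a topological space and K ⊆ X compact, and let T : M(K) → M_c(X) be the map μ ↦ μ^{(K,X)} where μ^{(K,X)}(B) := μ(B ∩ K). Then for every order bounded linear functional φ on M(K) there exists an order bounded linear functional ψ on M_c(X) such that φ = ψ ∘ T; that is, the order adjoint T~ : M_c(X)~ → M(K)~, ψ ↦ ψ ∘ T, is surjective. -/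
open MeasureTheory Function Topology
open scoped ENNReal

/-- A signed Borel measure `μ` is a *Radon measure* if `|μ|(B)` is the supremum of
`|μ|(C)` over compact subsets `C ⊆ B`, for every Borel set `B`. -/
def IsRadon {X : Type u} [TopologicalSpace X] [MeasurableSpace X]
    (μ : SignedMeasure X) : Prop :=
  ∀ B : Set X, MeasurableSet B →
    μ.totalVariation B = ⨆ (C : Set X) (_ : C ⊆ B) (_ : IsCompact C), μ.totalVariation C

/-- The support of a signed Borel measure. -/
def msupport {X : Type u} [TopologicalSpace X] [MeasurableSpace X]
    (μ : SignedMeasure X) : Set X :=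
  {x | ∀ U : Set X, IsOpen U → x ∈ U → 0 < μ.totalVariation U}

/-- Membership in `M_c(X)`: a compactly supported Radon measure. -/
def McMem {X : Type u} [TopologicalSpace X] [MeasurableSpace X]
    (μ : SignedMeasure X) : Prop :=
  IsRadon μ ∧ IsCompact (msupport μ)

/-- The extension map `T : M(K) → M_c(X)`, `μ ↦ μ^{(K,X)}` with
`μ^{(K,X)}(B) = μ(B ∩ K)`; it is implemented as the pushforward of `μ` under the
inclusion `K → X`. -/
noncomputable def extMeas {X : Type u} [TopologicalSpace X] [MeasurableSpace X]
    (K : Set X) (μ : SignedMeasure K) : SignedMeasure X :=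
  μ.map (Subtype.val : K → X)


section ComapAux

variable {X : Type u} [MeasurableSpace X]

lemma isFiniteMeasure_comap_subtype (K : Set X) (hKm : MeasurableSet K) (μ : Measure X)
    [IsFiniteMeasure μ] : IsFiniteMeasure (μ.comap (Subtype.val : K → X)) := by
  constructor
  rw [comap_subtype_coe_apply hKm]
  exact lt_of_le_of_lt (measure_mono (Set.subset_univ _)) (measure_lt_top μ _)

noncomputable def comapJD (K : Set X) (hKm : MeasurableSet K) (ν : SignedMeasure X) :
    JordanDecomposition K where
  posPart := ν.toJordanDecomposition.posPart.comap (Subtype.val : K → X)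
  negPart := ν.toJordanDecomposition.negPart.comap (Subtype.val : K → X)
  posPart_finite := isFiniteMeasure_comap_subtype K hKm _
  negPart_finite := isFiniteMeasure_comap_subtype K hKm _
  mutuallySingular := by
    obtain ⟨A, hA, h1, h2⟩ := ν.toJordanDecomposition.mutuallySingular
    refine ⟨Subtype.val ⁻¹' A, measurable_subtype_coe hA, ?_, ?_⟩
    · rw [comap_subtype_coe_apply hKm]
      exact measure_mono_null (Set.image_preimage_subset _ _) h1
    · rw [← Set.preimage_compl, comap_subtype_coe_apply hKm]
      exact measure_mono_null (Set.image_preimage_subset _ _) h2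

noncomputable def comapSM (K : Set X) (hKm : MeasurableSet K) (ν : SignedMeasure X) :
    SignedMeasure K :=
  (comapJD K hKm ν).toSignedMeasure

lemma comapSM_apply (K : Set X) (hKm : MeasurableSet K) (ν : SignedMeasure X) {B : Set K}
    (hB : MeasurableSet B) : comapSM K hKm ν B = ν (Subtype.val '' B) := by
  have hB' : MeasurableSet (Subtype.val '' B) :=
    (MeasurableEmbedding.subtype_coe hKm).measurableSet_image.mpr hB
  haveI := isFiniteMeasure_comap_subtype K hKm ν.toJordanDecomposition.posPart
  haveI := isFiniteMeasure_comap_subtype K hKm ν.toJordanDecomposition.negPart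
  conv_rhs => rw [← ν.toSignedMeasure_toJordanDecomposition]
  rw [comapSM, comapJD, JordanDecomposition.toSignedMeasure, JordanDecomposition.toSignedMeasure,
    VectorMeasure.sub_apply, VectorMeasure.sub_apply,
    Measure.toSignedMeasure_apply_measurable hB,
    Measure.toSignedMeasure_apply_measurable hB,
    Measure.toSignedMeasure_apply_measurable hB',
    Measure.toSignedMeasure_apply_measurable hB',
    Measure.real, Measure.real, Measure.real, Measure.real,
    comap_subtype_coe_apply hKm, comap_subtype_coe_apply hKm]

lemma totalVariation_comapSM (K : Set X) (hKm : MeasurableSet K) (ν : SignedMeasure X)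
    (B : Set K) :
    (comapSM K hKm ν).totalVariation B = ν.totalVariation (Subtype.val '' B) := by
  have h : (comapSM K hKm ν).toJordanDecomposition = comapJD K hKm ν :=
    JordanDecomposition.toJordanDecomposition_toSignedMeasure _
  rw [SignedMeasure.totalVariation, SignedMeasure.totalVariation, h]
  show (comapJD K hKm ν).posPart B + (comapJD K hKm ν).negPart B = _
  show ν.toJordanDecomposition.posPart.comap _ B + ν.toJordanDecomposition.negPart.comap _ B = _
  rw [comap_subtype_coe_apply hKm, comap_subtype_coe_apply hKm]
  rfl


lemma comapSM_add (K : Set X) (hKm : MeasurableSet K) (μ ν : SignedMeasure X) :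
    comapSM K hKm (μ + ν) = comapSM K hKm μ + comapSM K hKm ν := by
  apply MeasureTheory.VectorMeasure.ext
  intro i hi
  rw [MeasureTheory.VectorMeasure.add_apply, comapSM_apply K hKm _ hi, comapSM_apply K hKm _ hi,
    comapSM_apply K hKm _ hi, MeasureTheory.VectorMeasure.add_apply]

lemma comapSM_smul (K : Set X) (hKm : MeasurableSet K) (c : ℝ) (μ : SignedMeasure X) :
    comapSM K hKm (c • μ) = c • comapSM K hKm μ := by
  apply MeasureTheory.VectorMeasure.ext
  intro i hi
  rw [MeasureTheory.VectorMeasure.smul_apply, comapSM_apply K hKm _ hi, comapSM_apply K hKm _ hi,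
    MeasureTheory.VectorMeasure.smul_apply]

lemma comapSM_mono (K : Set X) (hKm : MeasurableSet K) {μ ν : SignedMeasure X} (h : μ ≤ ν) :
    comapSM K hKm μ ≤ comapSM K hKm ν := by
  rw [MeasureTheory.VectorMeasure.le_iff]
  intro i hi
  rw [comapSM_apply K hKm _ hi, comapSM_apply K hKm _ hi]
  exact MeasureTheory.VectorMeasure.le_iff.mp h _
    ((MeasurableEmbedding.subtype_coe hKm).measurableSet_image.mpr hi)

end ComapAux

section TopAux

variable {X : Type u} [TopologicalSpace X] [T2Space X] [MeasurableSpace X] [BorelSpace X]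

omit [T2Space X] [BorelSpace X] in
lemma comapSM_extMeas (K : Set X) (hKm : MeasurableSet K) (μ : SignedMeasure K) :
    comapSM K hKm (extMeas K μ) = μ := by
  apply MeasureTheory.VectorMeasure.ext
  intro i hi
  rw [comapSM_apply K hKm _ hi, extMeas,
    MeasureTheory.VectorMeasure.map_apply _ measurable_subtype_coe
      ((MeasurableEmbedding.subtype_coe hKm).measurableSet_image.mpr hi),
    Set.preimage_image_eq _ Subtype.val_injective]

omit [BorelSpace X] in
lemma isRadon_comapSM (K : Set X) (hK : IsCompact K) (hKm : MeasurableSet K)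
    (ν : SignedMeasure X) (hν : IsRadon ν) : IsRadon (comapSM K hKm ν) := by
  intro B hB
  have hB' : MeasurableSet (Subtype.val '' B) :=
    (MeasurableEmbedding.subtype_coe hKm).measurableSet_image.mpr hB
  rw [totalVariation_comapSM, hν _ hB']
  haveI : CompactSpace K := isCompact_iff_compactSpace.mp hK
  apply le_antisymm
  · refine iSup₂_le fun C hC => iSup_le fun hCc => ?_
    set C' : Set K := Subtype.val ⁻¹' C with hC'def
    have hC'c : IsCompact C' := (hCc.isClosed.preimage continuous_subtype_val).isCompact
    have hC'B : C' ⊆ B := by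
      intro x hx
      obtain ⟨y, hyB, hyx⟩ := hC hx
      exact Subtype.ext hyx ▸ hyB
    have himg : Subtype.val '' C' = C := by
      apply Set.image_preimage_eq_of_subset
      rw [Subtype.range_coe]
      intro x hx
      obtain ⟨y, _, rfl⟩ := hC hx
      exact y.2
    have hval : ν.totalVariation C = (comapSM K hKm ν).totalVariation C' := by
      rw [totalVariation_comapSM, himg]
    rw [hval]
    exact le_iSup₂_of_le C' hC'B (le_iSup_of_le hC'c le_rfl)
  · refine iSup₂_le fun C' hC' => iSup_le fun hC'c => ?_
    rw [totalVariation_comapSM]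
    exact le_iSup₂_of_le (Subtype.val '' C') (Set.image_mono hC')
      (le_iSup_of_le (hC'c.image continuous_subtype_val) le_rfl)

end TopAux

/-- For compact `K ⊆ X`, every order bounded linear functional `f` on
`M(K)` factors as `f = g ∘ T` for some order bounded linear functional `g` on `M_c(X)`,
where `T = extMeas K`; i.e. the order adjoint `T~ : M_c(X)~ → M(K)~` is surjective. -/
theorem order_adjoint_of_extension_surjective {X : Type u} [TopologicalSpace X]
    [T2Space X] [MeasurableSpace X] [BorelSpace X] (K : Set X) (hK : IsCompact K)
    (f : SignedMeasure K → ℝ)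
    (hadd : ∀ μ ν : SignedMeasure K, IsRadon μ → IsRadon ν → f (μ + ν) = f μ + f ν)
    (hsmul : ∀ (c : ℝ) (μ : SignedMeasure K), IsRadon μ → f (c • μ) = c * f μ)
    (hob : ∀ μ ν : SignedMeasure K, IsRadon μ → IsRadon ν →
      ∃ M : ℝ, ∀ ρ : SignedMeasure K, IsRadon ρ → μ ≤ ρ → ρ ≤ ν → |f ρ| ≤ M) :
    ∃ g : SignedMeasure X → ℝ,
      (∀ μ ν : SignedMeasure X, McMem μ → McMem ν → g (μ + ν) = g μ + g ν) ∧
      (∀ (c : ℝ) (μ : SignedMeasure X), McMem μ → g (c • μ) = c * g μ) ∧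
      (∀ μ ν : SignedMeasure X, McMem μ → McMem ν →
        ∃ M : ℝ, ∀ ρ : SignedMeasure X, McMem ρ → μ ≤ ρ → ρ ≤ ν → |g ρ| ≤ M) ∧
      (∀ μ : SignedMeasure K, IsRadon μ → f μ = g (extMeas K μ)) := by
  have hKm : MeasurableSet K := hK.isClosed.measurableSet
  refine ⟨fun ν => f (comapSM K hKm ν), ?_, ?_, ?_, ?_⟩ <;> beta_reduce
  · intro μ ν hμ hν
    rw [comapSM_add]
    exact hadd _ _ (isRadon_comapSM K hK hKm μ hμ.1) (isRadon_comapSM K hK hKm ν hν.1)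
  · intro c μ hμ
    rw [comapSM_smul]
    exact hsmul c _ (isRadon_comapSM K hK hKm μ hμ.1)
  · intro μ ν hμ hν
    obtain ⟨M, hM⟩ := hob (comapSM K hKm μ) (comapSM K hKm ν)
      (isRadon_comapSM K hK hKm μ hμ.1) (isRadon_comapSM K hK hKm ν hν.1)
    exact ⟨M, fun ρ hρ h1 h2 => hM _ (isRadon_comapSM K hK hKm ρ hρ.1)
      (comapSM_mono K hKm h1) (comapSM_mono K hKm h2)⟩
  · intro μ _
    rw [comapSM_extMeas]
end

section
/- Let X be a topological space. For nonempty compact subsets K ⊆ L of X define T_{K,L} : M(K) → M(L) by T_{K,L}(μ)(B) := μ(B ∩ K) for Borel B ⊆ L, and T_K : M(K) → M_c(X) by T_K(μ)(B) := μ(B ∩ K) for Borel B ⊆ X. Then: each T_{K,L} and each T_K is an injective interval preserving lattice homomorphism; T_L ∘ T_{K,L} = T_K whenever K ⊆ L; and (M_c(X), (T_K)) is the direct limit of this system in the category of vector lattices with interval preserving lattice homomorphisms, i.e., for every vector lattice F and every family of interval preserving lattice homomorphisms S_K : M(K) → F, indexed by the nonempty compact subsets K of X and satisfying S_L ∘ T_{K,L}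 = S_K whenever K ⊆ L, there exists a unique interval preserving lattice homomorphism S : M_c(X) → F such that S ∘ T_K = S_K for every nonempty compact K ⊆ X. -/
open MeasureTheory Function Topology
open scoped ENNReal

/-- The map `T_{K,L} : M(K) → M(L)` for `K ⊆ L`, `T_{K,L}(μ)(B) = μ(B ∩ K)`, implemented
as the pushforward under the inclusion `K → L`. -/
noncomputable def inclMeas {X : Type u} [TopologicalSpace X] [MeasurableSpace X]
    (K L : Set X) (h : K ⊆ L) (μ : SignedMeasure K) : SignedMeasure L :=
  μ.map (Set.inclusion h)

/-- `T` is an interval preserving lattice homomorphism from the part `P` of `A` onto the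
part `Q` of `B`: it is additive, homogeneous, maps `P` into `Q`, is positive, preserves
order intervals `[0,a]`, and maps suprema to suprema. -/
def IsIPLHOn {A : Type v} {B : Type w} [AddCommGroup A] [Module ℝ A] [Preorder A]
    [AddCommGroup B] [Module ℝ B] [Preorder B]
    (P : A → Prop) (Q : B → Prop) (T : A → B) : Prop :=
  (∀ a b : A, P a → P b → T (a + b) = T a + T b) ∧
  (∀ (c : ℝ) (a : A), P a → T (c • a) = c • T a) ∧
  (∀ a : A, P a → Q (T a)) ∧
  (∀ a : A, P a → 0 ≤ a → 0 ≤ T a) ∧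
  (∀ a : A, P a → 0 ≤ a →
    T '' {x : A | P x ∧ 0 ≤ x ∧ x ≤ a} = {y : B | Q y ∧ 0 ≤ y ∧ y ≤ T a}) ∧
  (∀ a b s : A, P a → P b → P s →
    (a ≤ s ∧ b ≤ s ∧ ∀ r : A, P r → a ≤ r → b ≤ r → s ≤ r) →
    (T a ≤ T s ∧ T b ≤ T s ∧ ∀ t : B, Q t → T a ≤ t → T b ≤ t → T s ≤ t))


set_option linter.unusedSectionVars false
namespace DL
variable {α : Type*} {β : Type*} [MeasurableSpace α] [MeasurableSpace β]





variable {α : Type*} {β : Type*} [MeasurableSpace α] [MeasurableSpace β]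

/-- The Hahn set with the total variation formula. -/
lemma sm_decomp (s : SignedMeasure α) :
    ∃ i : Set α, MeasurableSet i ∧ (∀ A, MeasurableSet A → A ⊆ i → 0 ≤ s A) ∧
      (∀ A, MeasurableSet A → A ⊆ iᶜ → s A ≤ 0) ∧
      ∀ B, MeasurableSet B → s.totalVariation B
        = ENNReal.ofReal (s (i ∩ B)) + ENNReal.ofReal (-s (iᶜ ∩ B)) := by
  obtain ⟨i, hi₁, hi₂, hi₃, hpos, hneg⟩ := s.toJordanDecomposition_spec
  refine ⟨i, hi₁, ?_, ?_, ?_⟩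
  · intro A hA hAi
    exact s.nonneg_of_zero_le_restrict (s.zero_le_restrict_subset hi₁ hAi hi₂)
  · intro A hA hAi
    exact s.nonpos_of_restrict_le_zero (s.restrict_le_zero_subset hi₁.compl hAi hi₃)
  · intro B hB
    rw [SignedMeasure.totalVariation, Measure.add_apply, hpos, hneg,
      s.toMeasureOfZeroLE_apply hi₂ hi₁ hB, s.toMeasureOfLEZero_apply hi₃ hi₁.compl hB]
    congr 1
    · exact (ENNReal.ofReal_eq_coe_nnreal _).symm
    · exact (ENNReal.ofReal_eq_coe_nnreal _).symm

lemma jordan_apply (s : SignedMeasure α) {B : Set α} (hB : MeasurableSet B) :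
    s B = (s.toJordanDecomposition.posPart B).toReal
      - (s.toJordanDecomposition.negPart B).toReal := by
  conv_lhs => rw [← s.toSignedMeasure_toJordanDecomposition]
  rw [JordanDecomposition.toSignedMeasure, VectorMeasure.sub_apply,
    Measure.toSignedMeasure_apply_measurable hB, Measure.toSignedMeasure_apply_measurable hB]
  rfl

lemma ofReal_apply_le (s : SignedMeasure α) {B : Set α} (hB : MeasurableSet B) :
    ENNReal.ofReal (s B) ≤ s.totalVariation B := by
  obtain ⟨i, hi, hp, hn, hf⟩ := sm_decomp s
  rw [hf B hB]
  have h1 : s B = s (i ∩ B) + s (iᶜ ∩ B) := by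
    rw [← s.of_union (Disjoint.mono Set.inter_subset_left Set.inter_subset_left
      disjoint_compl_right) (hi.inter hB) (hi.compl.inter hB)]
    congr 1
    rw [← Set.union_inter_distrib_right, Set.union_compl_self, Set.univ_inter]
  have h2 : s B ≤ s (i ∩ B) := by
    rw [h1]; nlinarith [hn _ (hi.compl.inter hB) Set.inter_subset_left]
  calc ENNReal.ofReal (s B) ≤ ENNReal.ofReal (s (i ∩ B)) := ENNReal.ofReal_le_ofReal h2
    _ ≤ _ := le_self_add

lemma tv_vanish (s : SignedMeasure α) {B : Set α} (hB : MeasurableSet B)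
    (h : ∀ A, MeasurableSet A → A ⊆ B → s A = 0) : s.totalVariation B = 0 := by
  obtain ⟨i, hi, hp, hn, hf⟩ := sm_decomp s
  rw [hf B hB, h _ (hi.inter hB) Set.inter_subset_right,
    h _ (hi.compl.inter hB) Set.inter_subset_right]
  simp

lemma tv_zero_on (s : SignedMeasure α) {B : Set α} (hB : s.totalVariation B = 0)
    {A : Set α} (hA : A ⊆ B) : s A = 0 :=
  s.null_of_totalVariation_zero (le_antisymm (hB ▸ measure_mono hA) (zero_le))

lemma tv_subadd (s t : SignedMeasure α) {B : Set α} (hB : MeasurableSet B) :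
    (s + t).totalVariation B ≤ s.totalVariation B + t.totalVariation B := by
  obtain ⟨i, hi, hp, hn, hf⟩ := sm_decomp (s + t)
  rw [hf B hB, VectorMeasure.add_apply, VectorMeasure.add_apply, neg_add]
  calc ENNReal.ofReal (s (i ∩ B) + t (i ∩ B)) + ENNReal.ofReal (-s (iᶜ ∩ B) + -t (iᶜ ∩ B))
      ≤ (ENNReal.ofReal (s (i ∩ B)) + ENNReal.ofReal (t (i ∩ B)))
        + (ENNReal.ofReal (-s (iᶜ ∩ B)) + ENNReal.ofReal (-t (iᶜ ∩ B))) :=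
        add_le_add ENNReal.ofReal_add_le ENNReal.ofReal_add_le
    _ ≤ (s.totalVariation (i ∩ B) + t.totalVariation (i ∩ B))
        + (s.totalVariation (iᶜ ∩ B) + t.totalVariation (iᶜ ∩ B)) := by
        refine add_le_add (add_le_add ?_ ?_) (add_le_add ?_ ?_)
        · exact ofReal_apply_le s (hi.inter hB)
        · exact ofReal_apply_le t (hi.inter hB)
        · have := ofReal_apply_le (-s) (hi.compl.inter hB)
          rwa [VectorMeasure.neg_apply, SignedMeasure.totalVariation_neg] at this
        · have := ofReal_apply_le (-t) (hi.compl.inter hB)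
          rwa [VectorMeasure.neg_apply, SignedMeasure.totalVariation_neg] at this
    _ = s.totalVariation B + t.totalVariation B := by
        rw [add_add_add_comm]
        have hU : (i ∩ B) ∪ (iᶜ ∩ B) = B := by
          rw [← Set.union_inter_distrib_right, Set.union_compl_self, Set.univ_inter]
        have hd : Disjoint (i ∩ B) (iᶜ ∩ B) := Disjoint.mono Set.inter_subset_left
          Set.inter_subset_left disjoint_compl_right
        rw [← measure_union hd (hi.compl.inter hB), ← measure_union hd (hi.compl.inter hB), hU]

/-- total variation of a nonneg measure. -/
lemma tv_of_nonneg {s : SignedMeasure α} (hs : 0 ≤ s) {B : Set α} (hB : MeasurableSet B) :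
    s.totalVariation B = ENNReal.ofReal (s B) := by
  obtain ⟨i, hi, hp, hn, hf⟩ := sm_decomp s
  refine le_antisymm ?_ (ofReal_apply_le s hB)
  rw [hf B hB]
  have h0 : s (iᶜ ∩ B) = 0 :=
    le_antisymm (hn _ (hi.compl.inter hB) Set.inter_subset_left) (by simpa using VectorMeasure.le_iff'.mp hs (iᶜ ∩ B))
  have h1 : s (i ∩ B) ≤ s B := by
    have := s.of_union (Disjoint.mono Set.inter_subset_left Set.inter_subset_left
      disjoint_compl_right) (hi.inter hB) (hi.compl.inter hB)
    rw [← Set.union_inter_distrib_right, Set.union_compl_self, Set.univ_inter] at this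
    rw [this, h0, add_zero]
  rw [h0, neg_zero, ENNReal.ofReal_zero, add_zero]
  exact ENNReal.ofReal_le_ofReal h1

lemma tv_mono_of_nonneg_le {x a : SignedMeasure α} (hx : 0 ≤ x) (hxa : x ≤ a)
    {B : Set α} (hB : MeasurableSet B) : x.totalVariation B ≤ a.totalVariation B := by
  rw [tv_of_nonneg hx hB]
  exact le_trans (ENNReal.ofReal_le_ofReal (VectorMeasure.le_iff'.mp hxa B)) (ofReal_apply_le a hB)






variable {α : Type*} {β : Type*} [MeasurableSpace α] [MeasurableSpace β]

/-- positive part as a signed measure -/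
noncomputable def pos (s : SignedMeasure α) : SignedMeasure α :=
  s.toJordanDecomposition.posPart.toSignedMeasure

lemma pos_apply (s : SignedMeasure α) {B : Set α} (hB : MeasurableSet B) :
    pos s B = (s.toJordanDecomposition.posPart B).toReal :=
  Measure.toSignedMeasure_apply_measurable hB

lemma zero_le_pos (s : SignedMeasure α) : 0 ≤ pos s := by
  refine VectorMeasure.le_iff.mpr fun B hB => ?_
  rw [VectorMeasure.zero_apply, pos_apply s hB]
  positivity

lemma le_pos (s : SignedMeasure α) : s ≤ pos s := by
  refine VectorMeasure.le_iff.mpr fun B hB => ?_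
  rw [pos_apply s hB, jordan_apply s hB]
  simp [ENNReal.toReal_nonneg]

lemma pos_le {s r : SignedMeasure α} (h1 : s ≤ r) (h2 : 0 ≤ r) : pos s ≤ r := by
  obtain ⟨i, hi₁, hi₂, hi₃, hposP, hnegP⟩ := s.toJordanDecomposition_spec
  refine VectorMeasure.le_iff.mpr fun B hB => ?_
  rw [pos_apply s hB, hposP, s.toMeasureOfZeroLE_apply hi₂ hi₁ hB]
  have h3 : s (i ∩ B) ≤ r (i ∩ B) := VectorMeasure.le_iff'.mp h1 _
  have h4 : r (i ∩ B) ≤ r B := by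
    have hU : (i ∩ B) ∪ (iᶜ ∩ B) = B := by
      rw [← Set.union_inter_distrib_right, Set.union_compl_self, Set.univ_inter]
    have hd : Disjoint (i ∩ B) (iᶜ ∩ B) := Disjoint.mono Set.inter_subset_left
      Set.inter_subset_left disjoint_compl_right
    have := r.of_union hd (hi₁.inter hB) (hi₁.compl.inter hB)
    rw [hU] at this
    rw [this]
    have := VectorMeasure.le_iff'.mp h2 (iᶜ ∩ B)
    simp only [VectorMeasure.zero_apply] at this
    linarith
  simpa using le_trans (le_trans (le_of_eq rfl) h3) h4

lemma tv_pos_le (s : SignedMeasure α) {B : Set α} (hB : MeasurableSet B) :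
    (pos s).totalVariation B ≤ s.totalVariation B := by
  rw [tv_of_nonneg (zero_le_pos s) hB, pos_apply s hB,
    ENNReal.ofReal_toReal (measure_ne_top _ _)]
  exact Measure.le_iff'.mp (Measure.le_add_right le_rfl) B

/-- the setwise supremum of two signed measures -/
noncomputable def ssup (a b : SignedMeasure α) : SignedMeasure α := a + pos (b - a)

lemma le_ssup_left (a b : SignedMeasure α) : a ≤ ssup a b := by
  refine VectorMeasure.le_iff.mpr fun B hB => ?_
  rw [ssup, VectorMeasure.add_apply]
  have := VectorMeasure.le_iff'.mp (zero_le_pos (b - a)) B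
  simp only [VectorMeasure.zero_apply] at this
  linarith

lemma le_ssup_right (a b : SignedMeasure α) : b ≤ ssup a b := by
  refine VectorMeasure.le_iff.mpr fun B hB => ?_
  rw [ssup, VectorMeasure.add_apply]
  have := VectorMeasure.le_iff'.mp (le_pos (b - a)) B
  rw [VectorMeasure.sub_apply] at this
  linarith

lemma ssup_le {a b r : SignedMeasure α} (ha : a ≤ r) (hb : b ≤ r) : ssup a b ≤ r := by
  have h1 : pos (b - a) ≤ r - a := by
    refine pos_le ?_ ?_
    · refine VectorMeasure.le_iff.mpr fun B hB => ?_
      rw [VectorMeasure.sub_apply, VectorMeasure.sub_apply]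
      have := VectorMeasure.le_iff'.mp hb B; linarith
    · refine VectorMeasure.le_iff.mpr fun B hB => ?_
      rw [VectorMeasure.sub_apply, VectorMeasure.zero_apply]
      have := VectorMeasure.le_iff'.mp ha B; linarith
  refine VectorMeasure.le_iff.mpr fun B hB => ?_
  rw [ssup, VectorMeasure.add_apply]
  have := VectorMeasure.le_iff'.mp h1 B
  rw [VectorMeasure.sub_apply] at this
  linarith

lemma tv_ssup_le (a b : SignedMeasure α) {B : Set α} (hB : MeasurableSet B) :
    (ssup a b).totalVariation B ≤ a.totalVariation B
      + (b.totalVariation B + a.totalVariation B) := by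
  calc (ssup a b).totalVariation B
      ≤ a.totalVariation B + (pos (b - a)).totalVariation B := tv_subadd a _ hB
    _ ≤ a.totalVariation B + (b - a).totalVariation B :=
        add_le_add le_rfl (tv_pos_le _ hB)
    _ ≤ _ := by
        refine add_le_add le_rfl ?_
        have : b - a = b + (-a) := by abel
        rw [this]
        refine le_trans (tv_subadd b (-a) hB) ?_
        rw [SignedMeasure.totalVariation_neg]



instance tv_finite (s : SignedMeasure α) : MeasureTheory.IsFiniteMeasure s.totalVariation := by
  rw [SignedMeasure.totalVariation]
  infer_instance
section H3
variable {X : Type*} [TopologicalSpace X] [MeasurableSpace X]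

/-- inner regularity wrt compact sets -/
def IR (m : Measure X) : Prop :=
  ∀ B : Set X, MeasurableSet B →
    m B = ⨆ (C : Set X) (_ : C ⊆ B) (_ : IsCompact C), m C

lemma isRadon_iff (μ : SignedMeasure X) : IsRadon μ ↔ IR μ.totalVariation := Iff.rfl

lemma IR_sup_le {m : Measure X} {B : Set X} :
    (⨆ (C : Set X) (_ : C ⊆ B) (_ : IsCompact C), m C) ≤ m B := by
  refine iSup_le fun C => iSup_le fun hC => iSup_le fun _ => measure_mono hC

lemma IR_le_sup {m : Measure X} {B C : Set X} (h1 : C ⊆ B) (h2 : IsCompact C) :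
    m C ≤ ⨆ (C : Set X) (_ : C ⊆ B) (_ : IsCompact C), m C := by
  refine le_trans ?_ (le_iSup _ C)
  rw [iSup_pos h1, iSup_pos h2]

lemma IR_zero : IR (0 : Measure X) := by
  intro B hB
  refine le_antisymm ?_ IR_sup_le
  simpa using IR_le_sup (Set.empty_subset B) isCompact_empty

variable [T2Space X] [BorelSpace X]

lemma IR_of_le {m lam : Measure X} [IsFiniteMeasure lam]
    (hle : ∀ B, MeasurableSet B → m B ≤ lam B) (hlam : IR lam) : IR m := by
  intro B hB
  refine le_antisymm ?_ IR_sup_le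
  refine ENNReal.le_of_forall_pos_le_add fun ε hε _ => ?_
  by_cases h0 : lam B = 0
  · refine le_trans (le_trans (hle B hB) (le_of_eq h0)) (zero_le)
  have hlt : lam B - ε < ⨆ (C : Set X) (_ : C ⊆ B) (_ : IsCompact C), lam C := by
    rw [← hlam B hB]
    exact ENNReal.sub_lt_self (measure_ne_top _ _) h0 (by exact_mod_cast hε.ne')
  obtain ⟨C, hC⟩ := lt_iSup_iff.mp hlt
  obtain ⟨hCB, hC⟩ := lt_iSup_iff.mp hC
  obtain ⟨hCcpt, hC⟩ := lt_iSup_iff.mp hC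
  have hCm : MeasurableSet C := hCcpt.isClosed.measurableSet
  have h1 : m B ≤ m C + m (B \ C) := by
    refine le_trans (measure_mono (show B ⊆ C ∪ (B \ C) by
      intro x hx; by_cases h : x ∈ C <;> simp [h, hx])) ?_
    exact measure_union_le C (B \ C)
  have h2 : m (B \ C) ≤ ε := by
    refine le_trans (hle _ (hB.diff hCm)) ?_
    rw [measure_diff hCB hCm.nullMeasurableSet (measure_ne_top _ _)]
    have h5 : lam B ≤ lam C + ε := tsub_le_iff_right.mp hC.le
    exact tsub_le_iff_left.mpr (by rw [add_comm] at h5 ⊢; exact h5)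
  calc m B ≤ m C + m (B \ C) := h1
    _ ≤ (⨆ (C : Set X) (_ : C ⊆ B) (_ : IsCompact C), m C) + ε :=
        add_le_add (IR_le_sup hCB hCcpt) h2

lemma IR_add {m₁ m₂ : Measure X} [IsFiniteMeasure m₁] [IsFiniteMeasure m₂]
    (h₁ : IR m₁) (h₂ : IR m₂) : IR (m₁ + m₂) := by
  intro B hB
  refine le_antisymm ?_ IR_sup_le
  refine ENNReal.le_of_forall_pos_le_add fun ε hε _ => ?_
  have hε2 : ((ε : ℝ≥0∞) / 2) ≠ 0 := by
    simp [ENNReal.div_eq_zero_iff, (by exact_mod_cast hε.ne' : (ε:ℝ≥0∞) ≠ 0)]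
  have key : ∀ (m : Measure X) , IsFiniteMeasure m → IR m →
      ∃ C : Set X, C ⊆ B ∧ IsCompact C ∧ m B ≤ m C + ε / 2 := by
    intro m hfin hm
    by_cases h0 : m B = 0
    · exact ⟨∅, Set.empty_subset B, isCompact_empty, by simp [h0]⟩
    have hlt : m B - ε / 2 < ⨆ (C : Set X) (_ : C ⊆ B) (_ : IsCompact C), m C := by
      rw [← hm B hB]
      exact ENNReal.sub_lt_self (measure_ne_top _ _) h0 hε2
    obtain ⟨C, hC⟩ := lt_iSup_iff.mp hlt
    obtain ⟨hCB, hC⟩ := lt_iSup_iff.mp hC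
    obtain ⟨hCcpt, hC⟩ := lt_iSup_iff.mp hC
    exact ⟨C, hCB, hCcpt, tsub_le_iff_right.mp hC.le⟩
  obtain ⟨C₁, h₁B, h₁c, h₁le⟩ := key m₁ inferInstance h₁
  obtain ⟨C₂, h₂B, h₂c, h₂le⟩ := key m₂ inferInstance h₂
  have hsub : (m₁ + m₂) B ≤ (m₁ + m₂) (C₁ ∪ C₂) + ε := by
    rw [Measure.add_apply, Measure.add_apply]
    calc m₁ B + m₂ B ≤ (m₁ C₁ + ε / 2) + (m₂ C₂ + ε / 2) := add_le_add h₁le h₂le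
      _ = (m₁ C₁ + m₂ C₂) + (ε / 2 + ε / 2) := by ring
      _ ≤ (m₁ (C₁ ∪ C₂) + m₂ (C₁ ∪ C₂)) + ε := by
          rw [ENNReal.add_halves]
          exact add_le_add (add_le_add (measure_mono Set.subset_union_left)
            (measure_mono Set.subset_union_right)) le_rfl
  exact le_trans hsub (add_le_add
    (IR_le_sup (Set.union_subset h₁B h₂B) (h₁c.union h₂c)) le_rfl)

lemma IR_smul {m : Measure X} (c : NNReal) (h : IR m) : IR (c • m) := by
  intro B hB
  simp only [Measure.smul_apply, smul_eq_mul, h B hB, ENNReal.mul_iSup,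
    ENNReal.smul_def, smul_eq_mul]

end H3
section H4
variable {α : Type*} {β : Type*} [MeasurableSpace α] [MeasurableSpace β]
variable {f : α → β}

lemma jdts_apply (j : JordanDecomposition α) {B : Set α} (hB : MeasurableSet B) :
    j.toSignedMeasure B = (j.posPart B).toReal - (j.negPart B).toReal := by
  show (j.posPart.toSignedMeasure - j.negPart.toSignedMeasure) B = _
  rw [VectorMeasure.sub_apply, Measure.toSignedMeasure_apply_measurable hB,
    Measure.toSignedMeasure_apply_measurable hB]
  rfl

lemma map_jd (hf : MeasurableEmbedding f) (s : SignedMeasure α) :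
    (SignedMeasure.toJordanDecomposition (s.map f)).posPart = s.toJordanDecomposition.posPart.map f ∧
    (SignedMeasure.toJordanDecomposition (s.map f)).negPart = s.toJordanDecomposition.negPart.map f := by
  set P := s.toJordanDecomposition.posPart with hP
  set N := s.toJordanDecomposition.negPart with hN
  obtain ⟨u, hu, hu1, hu2⟩ := s.toJordanDecomposition.mutuallySingular
  have hsing : (P.map f).MutuallySingular (N.map f) := by
    refine ⟨f '' u, hf.measurableSet_image' hu, ?_, ?_⟩
    · rw [Measure.map_apply hf.measurable (hf.measurableSet_image' hu),
        hf.injective.preimage_image]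
      exact hu1
    · rw [Measure.map_apply hf.measurable (hf.measurableSet_image' hu).compl,
        Set.preimage_compl, hf.injective.preimage_image]
      exact hu2
  have hfinP : MeasureTheory.IsFiniteMeasure (P.map f) := Measure.isFiniteMeasure_map P f
  have hfinN : MeasureTheory.IsFiniteMeasure (N.map f) := Measure.isFiniteMeasure_map N f
  have heq : s.map f = (JordanDecomposition.mk (P.map f) (N.map f)
      (posPart_finite := hfinP) (negPart_finite := hfinN) hsing).toSignedMeasure := by
    ext B hB
    rw [VectorMeasure.map_apply _ hf.measurable hB, jdts_apply _ hB,
      Measure.map_apply hf.measurable hB, Measure.map_apply hf.measurable hB,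
      jordan_apply s (hf.measurable hB)]
  rw [SignedMeasure.toJordanDecomposition_eq heq]
  exact ⟨rfl, rfl⟩

lemma tv_map (hf : MeasurableEmbedding f) (s : SignedMeasure α) :
    SignedMeasure.totalVariation (s.map f) = s.totalVariation.map f := by
  obtain ⟨h1, h2⟩ := map_jd hf s
  rw [SignedMeasure.totalVariation, SignedMeasure.totalVariation, h1, h2,
    Measure.map_add _ _ hf.measurable]

lemma map_pos (hf : MeasurableEmbedding f) (s : SignedMeasure α) :
    (pos s).map f = pos (s.map f) := by
  ext B hB
  rw [VectorMeasure.map_apply _ hf.measurable hB, pos_apply _ hB,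
    pos_apply _ (hf.measurable hB), (map_jd hf s).1,
    Measure.map_apply hf.measurable hB]

lemma map_sub (hf : MeasurableEmbedding f) (s t : SignedMeasure α) :
    (s - t).map f = s.map f - t.map f := by
  ext B hB
  rw [VectorMeasure.map_apply _ hf.measurable hB, VectorMeasure.sub_apply,
    VectorMeasure.sub_apply, VectorMeasure.map_apply _ hf.measurable hB,
    VectorMeasure.map_apply _ hf.measurable hB]

lemma map_ssup (hf : MeasurableEmbedding f) (a b : SignedMeasure α) :
    (ssup a b).map f = ssup (a.map f) (b.map f) := by
  rw [ssup, ssup, VectorMeasure.map_add, map_pos hf, map_sub hf]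

lemma map_mono (hf : MeasurableEmbedding f) {s t : SignedMeasure α} (h : s ≤ t) :
    s.map f ≤ t.map f := by
  refine VectorMeasure.le_iff.mpr fun B hB => ?_
  rw [VectorMeasure.map_apply _ hf.measurable hB, VectorMeasure.map_apply _ hf.measurable hB]
  exact VectorMeasure.le_iff'.mp h _

lemma map_zero' (hf : MeasurableEmbedding f) : (0 : SignedMeasure α).map f = 0 := by
  ext B hB
  rw [VectorMeasure.map_apply _ hf.measurable hB]; rfl

lemma map_nonneg (hf : MeasurableEmbedding f) {s : SignedMeasure α} (h : 0 ≤ s) :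
    0 ≤ s.map f := by
  have := map_mono hf h
  rwa [map_zero' hf] at this

lemma map_inj (hf : MeasurableEmbedding f) {s t : SignedMeasure α}
    (h : s.map f = t.map f) : s = t := by
  ext A hA
  have h2 := congrArg (fun v : MeasureTheory.VectorMeasure β ℝ => v (f '' A)) h
  simp only [VectorMeasure.map_apply _ hf.measurable (hf.measurableSet_image' hA),
    hf.injective.preimage_image] at h2
  exact h2

/-- pullback of a signed measure along a measurable embedding -/
noncomputable def comapSM (f : α → β) (s : SignedMeasure β) : SignedMeasure α :=
  (s.toJordanDecomposition.posPart.comap f).toSignedMeasure -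
    (s.toJordanDecomposition.negPart.comap f).toSignedMeasure

lemma comapSM_apply (hf : MeasurableEmbedding f) (s : SignedMeasure β) {A : Set α}
    (hA : MeasurableSet A) : comapSM f s A = s (f '' A) := by
  rw [comapSM, VectorMeasure.sub_apply, Measure.toSignedMeasure_apply_measurable hA,
    Measure.toSignedMeasure_apply_measurable hA, measureReal_def, measureReal_def,
    hf.comap_apply, hf.comap_apply,
    jordan_apply s (hf.measurableSet_image' hA)]

lemma comap_jd (hf : MeasurableEmbedding f) (s : SignedMeasure β) :
    (SignedMeasure.toJordanDecomposition (comapSM f s)).posPart = s.toJordanDecomposition.posPart.comap f ∧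
    (SignedMeasure.toJordanDecomposition (comapSM f s)).negPart = s.toJordanDecomposition.negPart.comap f := by
  set P := s.toJordanDecomposition.posPart with hP
  set N := s.toJordanDecomposition.negPart with hN
  obtain ⟨u, hu, hu1, hu2⟩ := s.toJordanDecomposition.mutuallySingular
  have hsing : (P.comap f).MutuallySingular (N.comap f) := by
    refine ⟨f ⁻¹' u, hf.measurable hu, ?_, ?_⟩
    · rw [hf.comap_apply]
      exact measure_mono_null (Set.image_preimage_subset f u) hu1
    · rw [hf.comap_apply]
      refine measure_mono_null ?_ hu2
      rw [← Set.preimage_compl]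
      exact Set.image_preimage_subset f uᶜ
  have heq : comapSM f s = (JordanDecomposition.mk (P.comap f) (N.comap f) hsing).toSignedMeasure := by
    ext A hA
    rw [comapSM_apply hf s hA, jdts_apply _ hA, hf.comap_apply, hf.comap_apply,
      jordan_apply s (hf.measurableSet_image' hA)]
  rw [SignedMeasure.toJordanDecomposition_eq heq]
  exact ⟨rfl, rfl⟩

lemma tv_comap (hf : MeasurableEmbedding f) (s : SignedMeasure β) :
    SignedMeasure.totalVariation (comapSM f s) = s.totalVariation.comap f := by
  obtain ⟨h1, h2⟩ := comap_jd hf s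
  rw [SignedMeasure.totalVariation, SignedMeasure.totalVariation, h1, h2]
  ext A hA
  rw [Measure.add_apply, hf.comap_apply, hf.comap_apply, hf.comap_apply, Measure.add_apply]

lemma comap_add (hf : MeasurableEmbedding f) (s t : SignedMeasure β) :
    comapSM f (s + t) = comapSM f s + comapSM f t := by
  ext A hA
  rw [comapSM_apply hf _ hA, VectorMeasure.add_apply, VectorMeasure.add_apply,
    comapSM_apply hf _ hA, comapSM_apply hf _ hA]

lemma comap_smul (hf : MeasurableEmbedding f) (c : ℝ) (s : SignedMeasure β) :
    comapSM f (c • s) = c • comapSM f s := by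
  ext A hA
  rw [comapSM_apply hf _ hA, VectorMeasure.smul_apply, VectorMeasure.smul_apply,
    comapSM_apply hf _ hA]

lemma comap_sub (hf : MeasurableEmbedding f) (s t : SignedMeasure β) :
    comapSM f (s - t) = comapSM f s - comapSM f t := by
  ext A hA
  rw [comapSM_apply hf _ hA, VectorMeasure.sub_apply, VectorMeasure.sub_apply,
    comapSM_apply hf _ hA, comapSM_apply hf _ hA]

lemma comap_mono (hf : MeasurableEmbedding f) {s t : SignedMeasure β} (h : s ≤ t) :
    comapSM f s ≤ comapSM f t := by
  refine VectorMeasure.le_iff.mpr fun A hA => ?_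
  rw [comapSM_apply hf _ hA, comapSM_apply hf _ hA]
  exact VectorMeasure.le_iff'.mp h _

lemma comap_zero (hf : MeasurableEmbedding f) : comapSM f (0 : SignedMeasure β) = 0 := by
  ext A hA
  rw [comapSM_apply hf _ hA]; rfl

lemma comap_nonneg (hf : MeasurableEmbedding f) {s : SignedMeasure β} (h : 0 ≤ s) :
    0 ≤ comapSM f s := by
  have := comap_mono hf h
  rwa [comap_zero hf] at this

lemma comap_pos_comm (hf : MeasurableEmbedding f) (s : SignedMeasure β) :
    comapSM f (pos s) = pos (comapSM f s) := by
  ext A hA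
  rw [comapSM_apply hf _ hA, pos_apply _ hA, pos_apply _ (hf.measurableSet_image' hA),
    (comap_jd hf s).1, hf.comap_apply]

lemma comap_ssup (hf : MeasurableEmbedding f) (a b : SignedMeasure β) :
    comapSM f (ssup a b) = ssup (comapSM f a) (comapSM f b) := by
  rw [ssup, ssup, comap_add hf, comap_pos_comm hf, comap_sub hf]

lemma comap_map (hf : MeasurableEmbedding f) (s : SignedMeasure α) :
    comapSM f (s.map f) = s := by
  ext A hA
  rw [comapSM_apply hf _ hA,
    VectorMeasure.map_apply _ hf.measurable (hf.measurableSet_image' hA),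
    hf.injective.preimage_image]

end H4
section H5
variable {Y : Type*} {X : Type*}
  [TopologicalSpace Y] [T2Space Y] [MeasurableSpace Y] [BorelSpace Y] [CompactSpace Y]
  [TopologicalSpace X] [T2Space X] [MeasurableSpace X] [BorelSpace X]
  {f : Y → X}

lemma IR_map (hf : MeasurableEmbedding f) (hc : Continuous f) {m : Measure Y}
    (h : IR m) : IR (m.map f) := by
  intro B hB
  refine le_antisymm ?_ IR_sup_le
  rw [Measure.map_apply hf.measurable hB, h _ (hf.measurable hB)]
  refine iSup_le fun C => iSup_le fun hCB => iSup_le fun hC => ?_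
  have h1 : m C = (m.map f) (f '' C) := by
    rw [Measure.map_apply hf.measurable
      (hf.measurableSet_image' hC.isClosed.measurableSet), hf.injective.preimage_image]
  rw [h1]
  exact IR_le_sup ((Set.image_mono hCB).trans (Set.image_preimage_subset f B))
    (hC.image hc)

lemma IR_comap (hf : MeasurableEmbedding f) (hc : Continuous f) {m : Measure X}
    (h : IR m) : IR (m.comap f) := by
  intro A hA
  refine le_antisymm ?_ IR_sup_le
  rw [hf.comap_apply, h _ (hf.measurableSet_image' hA)]
  refine iSup_le fun C => iSup_le fun hCA => iSup_le fun hC => ?_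
  have hCr : C ⊆ Set.range f := hCA.trans (Set.image_subset_range f A)
  have h1 : m C = (m.comap f) (f ⁻¹' C) := by
    rw [hf.comap_apply, Set.image_preimage_eq_inter_range,
      Set.inter_eq_self_of_subset_left hCr]
  rw [h1]
  refine IR_le_sup ?_ ((hC.isClosed.preimage hc).isCompact)
  intro y hy
  exact hf.injective.mem_set_image.mp (hCA hy)

lemma radon_map (hf : MeasurableEmbedding f) (hc : Continuous f) {s : SignedMeasure Y}
    (h : IsRadon s) : IsRadon (s.map f) := by
  rw [isRadon_iff] at h ⊢
  rw [tv_map hf]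
  exact IR_map hf hc h

lemma radon_comap (hf : MeasurableEmbedding f) (hc : Continuous f) {s : SignedMeasure X}
    (h : IsRadon s) : IsRadon (comapSM f s) := by
  rw [isRadon_iff] at h ⊢
  rw [tv_comap hf]
  exact IR_comap hf hc h

end H5

section H6
variable {X : Type*} [TopologicalSpace X] [MeasurableSpace X]

lemma not_mem_msupport {ν : SignedMeasure X} {x : X} :
    x ∉ msupport ν ↔ ∃ U : Set X, IsOpen U ∧ x ∈ U ∧ ν.totalVariation U = 0 := by
  simp only [msupport, Set.mem_setOf_eq, not_forall]
  constructor
  · rintro ⟨U, hU, hx, h⟩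
    exact ⟨U, hU, hx, by simpa using h⟩
  · rintro ⟨U, hU, hx, h⟩
    exact ⟨U, hU, hx, by simp [h]⟩

lemma isClosed_msupport (ν : SignedMeasure X) : IsClosed (msupport ν) := by
  rw [← isOpen_compl_iff]
  refine isOpen_iff_forall_mem_open.mpr fun x hx => ?_
  obtain ⟨U, hU, hxU, h0⟩ := not_mem_msupport.mp hx
  exact ⟨U, fun y hy => not_mem_msupport.mpr ⟨U, hU, hy, h0⟩, hU, hxU⟩

lemma msupport_subset_of_closed {ν : SignedMeasure X} {W : Set X} (hW : IsClosed W)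
    (h : ν.totalVariation Wᶜ = 0) : msupport ν ⊆ W := by
  intro x hx
  by_contra hxW
  have := hx Wᶜ hW.isOpen_compl hxW
  rw [h] at this
  exact lt_irrefl _ this

lemma msupport_subset_of_vanish {a b : SignedMeasure X}
    (h : ∀ U : Set X, IsOpen U → a.totalVariation U = 0 → b.totalVariation U = 0) :
    msupport b ⊆ msupport a := by
  intro x hx
  by_contra hxa
  obtain ⟨U, hU, hxU, h0⟩ := not_mem_msupport.mp hxa
  exact absurd (hx U hU hxU) (by simp [h U hU h0])

variable [T2Space X] [BorelSpace X]

lemma tv_msupport_compl {ν : SignedMeasure X} (h : IsRadon ν) :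
    ν.totalVariation (msupport ν)ᶜ = 0 := by
  rw [h _ (isClosed_msupport ν).measurableSet.compl]
  refine le_antisymm (iSup_le fun C => iSup_le fun hCS => iSup_le fun hC => ?_) (zero_le)
  choose U hUopen hmem hU0 using fun x : C => not_mem_msupport.mp (hCS x.2)
  obtain ⟨t, ht⟩ := hC.elim_finite_subcover (fun x : C => U x) hUopen
    (fun x hx => Set.mem_iUnion.mpr ⟨⟨x, hx⟩, hmem ⟨x, hx⟩⟩)
  calc ν.totalVariation C ≤ ν.totalVariation (⋃ i ∈ t, U i) := measure_mono ht
    _ ≤ ∑ i ∈ t, ν.totalVariation (U i) := measure_biUnion_finset_le t U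
    _ = 0 := by simp [hU0]

lemma concentration {ν : SignedMeasure X} (h : IsRadon ν) {W : Set X}
    (hW : MeasurableSet W) (hSW : msupport ν ⊆ W) {B : Set X} (hB : MeasurableSet B) :
    ν B = ν (B ∩ W) := by
  have h0 : ν (B \ W) = 0 := tv_zero_on ν (tv_msupport_compl h)
    (fun x hx => fun hS => hx.2 (hSW hS))
  have hU : (B ∩ W) ∪ (B \ W) = B := by
    ext x; by_cases hx : x ∈ W <;> simp [hx]
  have hd : Disjoint (B ∩ W) (B \ W) :=
    Set.disjoint_left.mpr fun x hx1 hx2 => hx2.2 hx1.2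
  have := ν.of_union hd (hB.inter hW) (hB.diff hW)
  rw [hU] at this
  rw [this, h0, add_zero]

lemma eq_zero_of_empty_support {ν : SignedMeasure X} (h : IsRadon ν)
    (hS : msupport ν = ∅) : ν = 0 := by
  have h0 : ν.totalVariation Set.univ = 0 := by
    have := tv_msupport_compl h
    rwa [hS, Set.compl_empty] at this
  ext A hA
  rw [tv_zero_on ν h0 (Set.subset_univ A)]
  rfl

lemma radon_zero : IsRadon (0 : SignedMeasure X) := by
  rw [isRadon_iff, SignedMeasure.totalVariation_zero]
  exact IR_zero

lemma radon_add {a b : SignedMeasure X} (ha : IsRadon a) (hb : IsRadon b) :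
    IsRadon (a + b) := by
  rw [isRadon_iff] at ha hb ⊢
  exact IR_of_le (fun B hB => tv_subadd a b hB) (IR_add ha hb)

lemma tv_smul_nnreal (r : ℝ) (s : SignedMeasure X) :
    ∃ c : NNReal, (r • s).totalVariation = c • s.totalVariation := by
  rcases le_or_gt 0 r with hr | hr
  · refine ⟨r.toNNReal, ?_⟩
    rw [SignedMeasure.totalVariation, SignedMeasure.totalVariation,
      s.toJordanDecomposition_smul_real,
      JordanDecomposition.real_smul_posPart_nonneg _ _ hr,
      JordanDecomposition.real_smul_negPart_nonneg _ _ hr, smul_add]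
  · refine ⟨(-r).toNNReal, ?_⟩
    rw [SignedMeasure.totalVariation, SignedMeasure.totalVariation,
      s.toJordanDecomposition_smul_real,
      JordanDecomposition.real_smul_posPart_neg _ _ hr,
      JordanDecomposition.real_smul_negPart_neg _ _ hr, smul_add, add_comm]

lemma radon_smul (r : ℝ) {s : SignedMeasure X} (h : IsRadon s) : IsRadon (r • s) := by
  rw [isRadon_iff] at h ⊢
  obtain ⟨c, hc⟩ := tv_smul_nnreal r s
  rw [hc]
  exact IR_smul c h

lemma radon_ssup {a b : SignedMeasure X} (ha : IsRadon a) (hb : IsRadon b) :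
    IsRadon (ssup a b) := by
  rw [isRadon_iff] at ha hb ⊢
  refine IR_of_le (fun B hB => tv_ssup_le a b hB) (IR_add ha (IR_add hb ha))

lemma msupport_smul_subset (c : ℝ) (a : SignedMeasure X) :
    msupport (c • a) ⊆ msupport a := by
  refine msupport_subset_of_vanish fun U hU h0 => ?_
  refine tv_vanish _ hU.measurableSet fun A hA hAU => ?_
  rw [VectorMeasure.smul_apply, tv_zero_on a h0 hAU, smul_zero]

lemma msupport_add_subset (a b : SignedMeasure X) :
    msupport (a + b) ⊆ msupport a ∪ msupport b := by
  intro x hx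
  by_contra hxa
  simp only [Set.mem_union, not_or] at hxa
  obtain ⟨U, hU, hxU, h0⟩ := not_mem_msupport.mp hxa.1
  obtain ⟨V, hV, hxV, h1⟩ := not_mem_msupport.mp hxa.2
  have h2 : (a + b).totalVariation (U ∩ V) = 0 := by
    refine tv_vanish _ (hU.inter hV).measurableSet fun A hA hAUV => ?_
    rw [VectorMeasure.add_apply,
      tv_zero_on a h0 (hAUV.trans Set.inter_subset_left),
      tv_zero_on b h1 (hAUV.trans Set.inter_subset_right), add_zero]
  have := hx (U ∩ V) (hU.inter hV) ⟨hxU, hxV⟩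
  simp [h2] at this

lemma msupport_nonneg_le_subset {x a : SignedMeasure X} (h0 : 0 ≤ x) (hxa : x ≤ a) :
    msupport x ⊆ msupport a := by
  refine msupport_subset_of_vanish fun U hU hv => ?_
  refine tv_vanish _ hU.measurableSet fun A hA hAU => ?_
  have h1 := VectorMeasure.le_iff'.mp h0 A
  have h2 := VectorMeasure.le_iff'.mp hxa A
  rw [VectorMeasure.zero_apply] at h1
  rw [tv_zero_on a hv hAU] at h2
  linarith

lemma msupport_ssup_subset (a b : SignedMeasure X) :
    msupport (ssup a b) ⊆ msupport a ∪ msupport b := by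
  refine (msupport_add_subset a (pos (b - a))).trans ?_
  refine Set.union_subset Set.subset_union_left ?_
  have hneg : msupport (-a : SignedMeasure X) = msupport a := by
    simp [msupport, SignedMeasure.totalVariation_neg]
  have htrans : msupport (b + -a) ⊆ msupport a ∪ msupport b := by
    refine (msupport_add_subset b (-a)).trans ?_
    rw [hneg]
    exact Set.union_subset Set.subset_union_right Set.subset_union_left
  refine Set.Subset.trans ?_ htrans
  have hsub : ∀ U : Set X, IsOpen U → (b + -a).totalVariation U = 0 →
      (pos (b - a)).totalVariation U = 0 := by
    intro U hU h0
    refine le_antisymm (le_trans (tv_pos_le _ hU.measurableSet) ?_) (zero_le)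
    rw [show b - a = b + -a from sub_eq_add_neg b a, h0]
  exact msupport_subset_of_vanish hsub

end H6
section H7
variable {X : Type*} [TopologicalSpace X] [T2Space X] [MeasurableSpace X] [BorelSpace X]
variable {K L : Set X}

lemma embVal (hK : IsCompact K) : MeasurableEmbedding (Subtype.val : K → X) :=
  MeasurableEmbedding.subtype_coe hK.isClosed.measurableSet

lemma incl_image_eq (h : K ⊆ L) (A : Set K) :
    Set.inclusion h '' A = (Subtype.val : L → X) ⁻¹' ((Subtype.val : K → X) '' A) := by
  ext ⟨y, hy⟩
  simp only [Set.mem_image, Set.mem_preimage]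
  constructor
  · rintro ⟨a, ha, hae⟩
    exact ⟨a, ha, congrArg Subtype.val hae⟩
  · rintro ⟨a, ha, hae⟩
    exact ⟨a, ha, Subtype.ext hae⟩

lemma embIncl (hK : IsCompact K) (h : K ⊆ L) : MeasurableEmbedding (Set.inclusion h) where
  injective := Set.inclusion_injective h
  measurable := (continuous_inclusion h).measurable
  measurableSet_image' := by
    intro A hA
    rw [incl_image_eq h A]
    exact measurable_subtype_coe ((embVal hK).measurableSet_image' hA)

lemma extMeas_apply (K : Set X) (μ : SignedMeasure K) {B : Set X} (hB : MeasurableSet B) :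
    extMeas K μ B = μ ((Subtype.val : K → X) ⁻¹' B) := by
  rw [extMeas, VectorMeasure.map_apply _ measurable_subtype_coe hB]

lemma inclMeas_apply (K L : Set X) (h : K ⊆ L) (μ : SignedMeasure K) {B : Set L}
    (hB : MeasurableSet B) : inclMeas K L h μ B = μ (Set.inclusion h ⁻¹' B) := by
  rw [inclMeas, VectorMeasure.map_apply _ (continuous_inclusion h).measurable hB]

lemma extMeas_inclMeas (K L : Set X) (h : K ⊆ L) (μ : SignedMeasure K) :
    extMeas L (inclMeas K L h μ) = extMeas K μ := by
  ext B hB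
  rw [extMeas_apply L _ hB, extMeas_apply K _ hB,
    inclMeas_apply K L h μ (measurable_subtype_coe hB)]
  congr 1

lemma extMeas_concentrated (hK : IsCompact K) (μ : SignedMeasure K) {B : Set X}
    (hB : MeasurableSet B) : extMeas K μ B = extMeas K μ (B ∩ K) := by
  rw [extMeas_apply K μ hB, extMeas_apply K μ (hB.inter hK.isClosed.measurableSet)]
  congr 1
  ext x
  simp [x.2]

lemma msupport_extMeas_subset (hK : IsCompact K) (μ : SignedMeasure K) :
    msupport (extMeas K μ) ⊆ K := by
  refine msupport_subset_of_closed hK.isClosed ?_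
  rw [extMeas, tv_map (embVal hK)]
  rw [Measure.map_apply measurable_subtype_coe hK.isClosed.measurableSet.compl]
  have : (Subtype.val : K → X) ⁻¹' Kᶜ = ∅ := by
    ext x; simp [x.2]
  rw [this]
  simp

lemma mcmem_extMeas (hK : IsCompact K) {μ : SignedMeasure K} (h : IsRadon μ) :
    McMem (extMeas K μ) := by
  haveI : CompactSpace K := isCompact_iff_compactSpace.mp hK
  refine ⟨radon_map (embVal hK) continuous_subtype_val h, ?_⟩
  exact IsCompact.of_isClosed_subset hK (isClosed_msupport _) (msupport_extMeas_subset hK μ)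

lemma comap_extMeas (hK : IsCompact K) (μ : SignedMeasure K) :
    comapSM (Subtype.val : K → X) (extMeas K μ) = μ :=
  comap_map (embVal hK) μ

lemma extMeas_comapSM (hK : IsCompact K) {ν : SignedMeasure X} (hrad : IsRadon ν)
    (hsupp : msupport ν ⊆ K) : extMeas K (comapSM (Subtype.val : K → X) ν) = ν := by
  ext B hB
  rw [extMeas_apply K _ hB, comapSM_apply (embVal hK) ν (measurable_subtype_coe hB)]
  rw [Subtype.image_preimage_coe, Set.inter_comm,
    ← concentration hrad hK.isClosed.measurableSet hsupp hB]

lemma val_image_incl_preimage (h : K ⊆ L) (A : Set L) :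
    (Subtype.val : K → X) '' (Set.inclusion h ⁻¹' A) = ((Subtype.val : L → X) '' A) ∩ K := by
  ext x
  simp only [Set.mem_image, Set.mem_preimage, Set.mem_inter_iff]
  constructor
  · rintro ⟨a, ha, rfl⟩
    exact ⟨⟨Set.inclusion h a, ha, rfl⟩, a.2⟩
  · rintro ⟨⟨a, ha, rfl⟩, hx⟩
    exact ⟨⟨a.1, hx⟩, by simpa [Set.inclusion] using ha, rfl⟩

lemma inclMeas_comapSM (hK : IsCompact K) (hL : IsCompact L) (h : K ⊆ L)
    {ν : SignedMeasure X} (hrad : IsRadon ν) (hsupp : msupport ν ⊆ K) :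
    inclMeas K L h (comapSM (Subtype.val : K → X) ν) = comapSM (Subtype.val : L → X) ν := by
  ext A hA
  rw [inclMeas_apply K L h _ hA, comapSM_apply (embVal hL) ν hA,
    comapSM_apply (embVal hK) ν ((embIncl hK h).measurable hA),
    val_image_incl_preimage h A]
  exact (concentration hrad hK.isClosed.measurableSet hsupp
    ((embVal hL).measurableSet_image' hA)).symm

lemma mcmem_zero : McMem (0 : SignedMeasure X) := by
  refine ⟨radon_zero, ?_⟩
  have : msupport (0 : SignedMeasure X) = ∅ := by
    ext x
    simp only [msupport, SignedMeasure.totalVariation_zero, Set.mem_setOf_eq,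
      Measure.coe_zero, Pi.zero_apply, lt_irrefl, Set.mem_empty_iff_false, iff_false,
      not_forall]
    exact ⟨Set.univ, isOpen_univ, trivial, by simp⟩
  rw [this]
  exact isCompact_empty

lemma mcmem_add {a b : SignedMeasure X} (ha : McMem a) (hb : McMem b) : McMem (a + b) :=
  ⟨radon_add ha.1 hb.1, IsCompact.of_isClosed_subset (ha.2.union hb.2)
    (isClosed_msupport _) (msupport_add_subset a b)⟩

lemma mcmem_smul (c : ℝ) {a : SignedMeasure X} (ha : McMem a) : McMem (c • a) :=
  ⟨radon_smul c ha.1, IsCompact.of_isClosed_subset ha.2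
    (isClosed_msupport _) (msupport_smul_subset c a)⟩

lemma mcmem_ssup {a b : SignedMeasure X} (ha : McMem a) (hb : McMem b) : McMem (ssup a b) :=
  ⟨radon_ssup ha.1 hb.1, IsCompact.of_isClosed_subset (ha.2.union hb.2)
    (isClosed_msupport _) (msupport_ssup_subset a b)⟩

end H7
section H8
variable {α : Type*} {β : Type*} [MeasurableSpace α] [MeasurableSpace β] {f : α → β}

lemma interval_surj (hf : MeasurableEmbedding f) {a : SignedMeasure α} {y : SignedMeasure β}
    (hy0 : 0 ≤ y) (hya : y ≤ a.map f) :
    (comapSM f y).map f = y ∧ 0 ≤ comapSM f y ∧ comapSM f y ≤ a := by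
  have hvan : ∀ B : Set β, MeasurableSet B → B ⊆ (Set.range f)ᶜ → y B = 0 := by
    intro B hB hBr
    refine le_antisymm ?_ (by simpa using VectorMeasure.le_iff'.mp hy0 B)
    have h1 : f ⁻¹' B = ∅ := by
      ext x
      simp only [Set.mem_preimage, Set.mem_empty_iff_false, iff_false]
      intro hxB
      exact hBr hxB (Set.mem_range_self x)
    have := VectorMeasure.le_iff'.mp hya B
    rwa [VectorMeasure.map_apply _ hf.measurable hB, h1, VectorMeasure.empty] at this
  have hconc : ∀ B : Set β, MeasurableSet B → y B = y (B ∩ Set.range f) := by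
    intro B hB
    have hU : (B ∩ Set.range f) ∪ (B \ Set.range f) = B := by
      ext x; by_cases hx : x ∈ Set.range f <;> simp [hx]
    have hd : Disjoint (B ∩ Set.range f) (B \ Set.range f) :=
      Set.disjoint_left.mpr fun x hx1 hx2 => hx2.2 hx1.2
    have h2 := y.of_union hd (hB.inter hf.measurableSet_range)
      (hB.diff hf.measurableSet_range)
    rw [hU] at h2
    rw [h2, hvan _ (hB.diff hf.measurableSet_range) (fun x hx => hx.2), add_zero]
  refine ⟨?_, comap_nonneg hf hy0, ?_⟩
  · ext B hB
    rw [VectorMeasure.map_apply _ hf.measurable hB, comapSM_apply hf _ (hf.measurable hB),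
      Set.image_preimage_eq_inter_range, ← hconc B hB]
  · refine VectorMeasure.le_iff.mpr fun A hA => ?_
    rw [comapSM_apply hf _ hA]
    have := VectorMeasure.le_iff'.mp hya (f '' A)
    rwa [VectorMeasure.map_apply _ hf.measurable (hf.measurableSet_image' hA),
      hf.injective.preimage_image] at this

lemma sup_is_ssup {a b s : SignedMeasure α} (P : SignedMeasure α → Prop)
    (hssup : P (ssup a b))
    (h : a ≤ s ∧ b ≤ s ∧ ∀ r : SignedMeasure α, P r → a ≤ r → b ≤ r → s ≤ r) :
    s = ssup a b :=
  le_antisymm (h.2.2 _ hssup (le_ssup_left a b) (le_ssup_right a b))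
    (ssup_le h.1 h.2.1)

end H8

section H9
variable {X : Type*} [TopologicalSpace X] [T2Space X] [MeasurableSpace X] [BorelSpace X]

lemma msupport_zero : msupport (0 : SignedMeasure X) = ∅ := by
  ext x
  simp only [msupport, SignedMeasure.totalVariation_zero, Set.mem_setOf_eq,
    Measure.coe_zero, Pi.zero_apply, lt_irrefl, Set.mem_empty_iff_false, iff_false,
    not_forall]
  exact ⟨Set.univ, isOpen_univ, trivial, by simp⟩

end H9

section H10
variable {X : Type*} [TopologicalSpace X] [T2Space X] [MeasurableSpace X] [BorelSpace X]

lemma ssup_zero (α : Type*) [MeasurableSpace α] : ssup (0 : SignedMeasure α) 0 = 0 := by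
  refine le_antisymm (ssup_le le_rfl le_rfl) (le_ssup_left 0 0)

end H10

section H11
variable {X : Type*} [TopologicalSpace X] [T2Space X] [MeasurableSpace X] [BorelSpace X]

lemma radon_comap' {K : Set X} (hK : IsCompact K) {ν : SignedMeasure X} (h : IsRadon ν) :
    IsRadon (comapSM (Subtype.val : K → X) ν) := by
  haveI : CompactSpace K := isCompact_iff_compactSpace.mp hK
  exact radon_comap (embVal hK) continuous_subtype_val h

end H11
end DL
/-- `(M_c(X), (T_K))` is the direct limit of the system of the `M(K)`,
`K ⊆ X` nonempty compact, with connecting maps `T_{K,L}`, in the category of vector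
lattices with interval preserving lattice homomorphisms. -/
theorem Mc_is_direct_limit {X : Type u} [TopologicalSpace X] [T2Space X]
    [MeasurableSpace X] [BorelSpace X] :
    -- defining properties of the maps
    (∀ (K L : Set X) (h : K ⊆ L) (μ : SignedMeasure K) (B : Set L), MeasurableSet B →
      inclMeas K L h μ B = μ (Set.inclusion h ⁻¹' B)) ∧
    (∀ (K : Set X) (μ : SignedMeasure K) (B : Set X), MeasurableSet B →
      extMeas K μ B = μ ((Subtype.val : K → X) ⁻¹' B)) ∧
    -- each T_{K,L} is an injective interval preserving lattice homomorphism
    (∀ K L : Set X, K.Nonempty → IsCompact K → L.Nonempty → IsCompact L → ∀ h : K ⊆ L,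
      IsIPLHOn (fun μ : SignedMeasure K => IsRadon μ)
        (fun ν : SignedMeasure L => IsRadon ν) (inclMeas K L h) ∧
      (∀ μ ν : SignedMeasure K, IsRadon μ → IsRadon ν →
        inclMeas K L h μ = inclMeas K L h ν → μ = ν)) ∧
    -- each T_K is an injective interval preserving lattice homomorphism into M_c(X)
    (∀ K : Set X, K.Nonempty → IsCompact K →
      IsIPLHOn (fun μ : SignedMeasure K => IsRadon μ)
        (fun ν : SignedMeasure X => McMem ν) (extMeas K) ∧
      (∀ μ ν : SignedMeasure K, IsRadon μ → IsRadon ν →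
        extMeas K μ = extMeas K ν → μ = ν)) ∧
    -- compatibility: T_L ∘ T_{K,L} = T_K
    (∀ (K L : Set X) (h : K ⊆ L) (μ : SignedMeasure K),
      extMeas L (inclMeas K L h μ) = extMeas K μ) ∧
    -- universal property of the direct limit
    (∀ (F : Type u) (_ : Lattice F) (_ : AddCommGroup F) (_ : Module ℝ F),
      (∀ x y z : F, x ≤ y → x + z ≤ y + z) →
      (∀ (c : ℝ) (x : F), 0 ≤ c → 0 ≤ x → 0 ≤ c • x) →
      ∀ S : (K : Set X) → SignedMeasure K → F,
        (∀ K : Set X, K.Nonempty → IsCompact K →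
          IsIPLHOn (fun μ : SignedMeasure K => IsRadon μ) (fun _ : F => True) (S K)) →
        (∀ K L : Set X, K.Nonempty → IsCompact K → L.Nonempty → IsCompact L →
          ∀ (h : K ⊆ L) (μ : SignedMeasure K), IsRadon μ →
            S L (inclMeas K L h μ) = S K μ) →
        ∃ Sb : SignedMeasure X → F,
          (IsIPLHOn (fun ν : SignedMeasure X => McMem ν) (fun _ : F => True) Sb ∧
            ∀ K : Set X, K.Nonempty → IsCompact K →
              ∀ μ : SignedMeasure K, IsRadon μ → Sb (extMeas K μ) = S K μ) ∧
          (∀ Sb' : SignedMeasure X → F,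
            (IsIPLHOn (fun ν : SignedMeasure X => McMem ν) (fun _ : F => True) Sb' ∧
              ∀ K : Set X, K.Nonempty → IsCompact K →
                ∀ μ : SignedMeasure K, IsRadon μ → Sb' (extMeas K μ) = S K μ) →
            ∀ ν : SignedMeasure X, McMem ν → Sb' ν = Sb ν)) := by
  classical
  have part2 : ∀ K L : Set X, K.Nonempty → IsCompact K → L.Nonempty → IsCompact L →
      ∀ h : K ⊆ L,
      IsIPLHOn (fun μ : SignedMeasure K => IsRadon μ)
        (fun ν : SignedMeasure L => IsRadon ν) (inclMeas K L h) ∧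
      (∀ μ ν : SignedMeasure K, IsRadon μ → IsRadon ν →
        inclMeas K L h μ = inclMeas K L h ν → μ = ν) := by
    intro K L hKne hK hLne hL h
    have emb := DL.embIncl hK h
    have hc := continuous_inclusion h
    haveI : CompactSpace K := isCompact_iff_compactSpace.mp hK
    haveI : CompactSpace L := isCompact_iff_compactSpace.mp hL
    constructor
    · refine ⟨?_, ?_, ?_, ?_, ?_, ?_⟩
      · intro a b _ _
        exact VectorMeasure.map_add a b (Set.inclusion h)
      · intro c a _
        exact VectorMeasure.map_smul c
      · intro a ha
        exact DL.radon_map emb hc ha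
      · intro a _ h0
        exact DL.map_nonneg emb h0
      · intro a _ h0a
        ext y
        constructor
        · rintro ⟨x, ⟨hPx, hx0, hxa⟩, rfl⟩
          exact ⟨DL.radon_map emb hc hPx, DL.map_nonneg emb hx0, DL.map_mono emb hxa⟩
        · rintro ⟨hQy, hy0, hya⟩
          obtain ⟨he, h0, hle⟩ := DL.interval_surj emb hy0 hya
          exact ⟨DL.comapSM (Set.inclusion h) y,
            ⟨DL.radon_comap emb hc hQy, h0, hle⟩, he⟩
      · intro a b s Pa Pb Ps hsup
        have hseq : s = DL.ssup a b := DL.sup_is_ssup _ (DL.radon_ssup Pa Pb) hsup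
        refine ⟨DL.map_mono emb hsup.1, DL.map_mono emb hsup.2.1, ?_⟩
        intro t _ h1 h2
        have hms : inclMeas K L h (DL.ssup a b)
            = DL.ssup (inclMeas K L h a) (inclMeas K L h b) := DL.map_ssup emb a b
        rw [hseq, hms]
        exact DL.ssup_le h1 h2
    · intro μ ν _ _ hmap
      exact DL.map_inj emb hmap
  have part3 : ∀ K : Set X, K.Nonempty → IsCompact K →
      IsIPLHOn (fun μ : SignedMeasure K => IsRadon μ)
        (fun ν : SignedMeasure X => McMem ν) (extMeas K) ∧
      (∀ μ ν : SignedMeasure K, IsRadon μ → IsRadon ν →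
        extMeas K μ = extMeas K ν → μ = ν) := by
    intro K hKne hK
    have emb := DL.embVal hK
    have hc : Continuous (Subtype.val : K → X) := continuous_subtype_val
    haveI : CompactSpace K := isCompact_iff_compactSpace.mp hK
    constructor
    · refine ⟨?_, ?_, ?_, ?_, ?_, ?_⟩
      · intro a b _ _
        exact VectorMeasure.map_add a b _
      · intro c a _
        exact VectorMeasure.map_smul c
      · intro a ha
        exact DL.mcmem_extMeas hK ha
      · intro a _ h0
        exact DL.map_nonneg emb h0
      · intro a _ h0a
        ext y
        constructor
        · rintro ⟨x, ⟨hPx, hx0, hxa⟩, rfl⟩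
          exact ⟨DL.mcmem_extMeas hK hPx, DL.map_nonneg emb hx0, DL.map_mono emb hxa⟩
        · rintro ⟨hQy, hy0, hya⟩
          obtain ⟨he, h0, hle⟩ := DL.interval_surj emb hy0 hya
          exact ⟨DL.comapSM (Subtype.val : K → X) y,
            ⟨DL.radon_comap emb hc hQy.1, h0, hle⟩, he⟩
      · intro a b s Pa Pb Ps hsup
        have hseq : s = DL.ssup a b := DL.sup_is_ssup _ (DL.radon_ssup Pa Pb) hsup
        refine ⟨DL.map_mono emb hsup.1, DL.map_mono emb hsup.2.1, ?_⟩
        intro t _ h1 h2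
        have hms : extMeas K (DL.ssup a b)
            = DL.ssup (extMeas K a) (extMeas K b) := DL.map_ssup emb a b
        rw [hseq, hms]
        exact DL.ssup_le h1 h2
    · intro μ ν _ _ hmap
      exact DL.map_inj emb hmap
  refine ⟨fun K L h μ B hB => DL.inclMeas_apply K L h μ hB,
    fun K μ B hB => DL.extMeas_apply K μ hB, part2, part3,
    fun K L h μ => DL.extMeas_inclMeas K L h μ, ?_⟩

  intro F instL instG instM hadd hsmul S hS hcompat
  set Sb : SignedMeasure X → F := fun ν =>
    if h : McMem ν ∧ (msupport ν).Nonempty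
    then S (msupport ν) (DL.comapSM (Subtype.val : (msupport ν) → X) ν) else 0
    with hSbdef
  -- S K kills zero
  have hS0 : ∀ K : Set X, K.Nonempty → IsCompact K → S K 0 = 0 := by
    intro K hne hK
    have h1 := (hS K hne hK).1 0 0 DL.radon_zero DL.radon_zero
    rw [add_zero] at h1
    have h2 : S K 0 + S K 0 = S K 0 + 0 := by rw [add_zero, ← h1]
    exact add_left_cancel h2
  have hSb0 : Sb 0 = 0 := by
    rw [hSbdef]
    simp only [DL.msupport_zero]
    rw [dif_neg (by simp)]
  -- coherence
  have hcoh : ∀ ν : SignedMeasure X, McMem ν → ∀ K : Set X, K.Nonempty → IsCompact K →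
      msupport ν ⊆ K → Sb ν = S K (DL.comapSM (Subtype.val : K → X) ν) := by
    intro ν hν K hKne hK hsub
    by_cases hemp : (msupport ν).Nonempty
    · have hM : IsCompact (msupport ν) := hν.2
      have hrad : IsRadon (DL.comapSM (Subtype.val : (msupport ν) → X) ν) :=
        DL.radon_comap' hM hν.1
      have h1 : Sb ν = S (msupport ν) (DL.comapSM (Subtype.val : (msupport ν) → X) ν) := by
        rw [hSbdef]; exact dif_pos ⟨hν, hemp⟩
      rw [h1, ← hcompat (msupport ν) K hemp hM hKne hK hsub _ hrad,
        DL.inclMeas_comapSM hM hK hsub hν.1 subset_rfl]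
    · have hν0 : ν = 0 :=
        DL.eq_zero_of_empty_support hν.1 (Set.not_nonempty_iff_eq_empty.mp hemp)
      rw [hν0, hSb0, DL.comap_zero (DL.embVal hK), hS0 K hKne hK]
  -- agreement
  have hagree : ∀ K : Set X, K.Nonempty → IsCompact K → ∀ μ : SignedMeasure K,
      IsRadon μ → Sb (extMeas K μ) = S K μ := by
    intro K hKne hK μ hrad
    rw [hcoh _ (DL.mcmem_extMeas hK hrad) K hKne hK (DL.msupport_extMeas_subset hK μ),
      DL.comap_extMeas hK μ]
  refine ⟨Sb, ⟨⟨?_, ?_, fun _ _ => trivial, ?_, ?_, ?_⟩, hagree⟩, ?_⟩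
  -- additivity
  · intro a b ha hb
    by_cases hne : (msupport a ∪ msupport b).Nonempty
    · have hKc : IsCompact (msupport a ∪ msupport b) := ha.2.union hb.2
      have emb := DL.embVal hKc
      rw [hcoh (a + b) (DL.mcmem_add ha hb) _ hne hKc (DL.msupport_add_subset a b),
        hcoh a ha _ hne hKc Set.subset_union_left,
        hcoh b hb _ hne hKc Set.subset_union_right,
        DL.comap_add emb]
      exact (hS _ hne hKc).1 _ _
        (DL.radon_comap' hKc ha.1)
        (DL.radon_comap' hKc hb.1)
    · rw [Set.not_nonempty_iff_eq_empty, Set.union_empty_iff] at hne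
      have ha0 : a = 0 := DL.eq_zero_of_empty_support ha.1 hne.1
      have hb0 : b = 0 := DL.eq_zero_of_empty_support hb.1 hne.2
      rw [ha0, hb0, add_zero, hSb0, add_zero]
  -- smul
  · intro c a ha
    by_cases hne : (msupport a).Nonempty
    · have emb := DL.embVal ha.2
      rw [hcoh (c • a) (DL.mcmem_smul c ha) _ hne ha.2 (DL.msupport_smul_subset c a),
        hcoh a ha _ hne ha.2 subset_rfl, DL.comap_smul emb]
      exact (hS _ hne ha.2).2.1 c _ (DL.radon_comap' ha.2 ha.1)
    · have ha0 : a = 0 :=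
        DL.eq_zero_of_empty_support ha.1 (Set.not_nonempty_iff_eq_empty.mp hne)
      rw [ha0, smul_zero, hSb0, smul_zero]
  -- positivity
  · intro a ha h0a
    by_cases hne : (msupport a).Nonempty
    · have emb := DL.embVal ha.2
      rw [hcoh a ha _ hne ha.2 subset_rfl]
      exact (hS _ hne ha.2).2.2.2.1 _ (DL.radon_comap' ha.2 ha.1)
        (DL.comap_nonneg emb h0a)
    · have ha0 : a = 0 :=
        DL.eq_zero_of_empty_support ha.1 (Set.not_nonempty_iff_eq_empty.mp hne)
      rw [ha0, hSb0]
  -- interval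
  · intro a ha h0a
    by_cases hne : (msupport a).Nonempty
    · have hKc := ha.2
      have emb := DL.embVal hKc
      have hcont : Continuous (Subtype.val : (msupport a) → X) := continuous_subtype_val
      have hrada : IsRadon (DL.comapSM (Subtype.val : (msupport a) → X) a) :=
        DL.radon_comap' hKc ha.1
      have h0ca : 0 ≤ DL.comapSM (Subtype.val : (msupport a) → X) a :=
        DL.comap_nonneg emb h0a
      have hSba : Sb a = S (msupport a) (DL.comapSM (Subtype.val : (msupport a) → X) a) :=
        hcoh a ha _ hne hKc subset_rfl
      have hint := (hS _ hne hKc).2.2.2.2.1 _ hrada h0ca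
      ext y
      constructor
      · rintro ⟨x, ⟨hPx, hx0, hxa⟩, rfl⟩
        have hsx : msupport x ⊆ msupport a := DL.msupport_nonneg_le_subset hx0 hxa
        have hSbx : Sb x = S (msupport a) (DL.comapSM (Subtype.val : (msupport a) → X) x) :=
          hcoh x hPx _ hne hKc hsx
        have hmem : DL.comapSM (Subtype.val : (msupport a) → X) x ∈
            {z : SignedMeasure (msupport a) | IsRadon z ∧ 0 ≤ z ∧
              z ≤ DL.comapSM (Subtype.val : (msupport a) → X) a} :=
          ⟨DL.radon_comap' hKc hPx.1, DL.comap_nonneg emb hx0, DL.comap_mono emb hxa⟩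
        have := (Set.ext_iff.mp hint (Sb x)).mp ⟨_, hmem, hSbx.symm⟩
        exact ⟨trivial, this.2.1, by rw [hSba]; exact this.2.2⟩
      · rintro ⟨-, hy0, hya⟩
        rw [hSba] at hya
        have := (Set.ext_iff.mp hint y).mpr ⟨trivial, hy0, hya⟩
        obtain ⟨z, ⟨hzrad, hz0, hza⟩, rfl⟩ := this
        refine ⟨extMeas (msupport a) z, ⟨DL.mcmem_extMeas hKc hzrad,
          DL.map_nonneg emb hz0, ?_⟩, hagree _ hne hKc z hzrad⟩
        have h1 : extMeas (msupport a) (DL.comapSM (Subtype.val : (msupport a) → X) a) = a :=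
          DL.extMeas_comapSM hKc ha.1 subset_rfl
        calc extMeas (msupport a) z
            ≤ extMeas (msupport a) (DL.comapSM (Subtype.val : (msupport a) → X) a) :=
              DL.map_mono emb hza
          _ = a := h1
    · have ha0 : a = 0 :=
        DL.eq_zero_of_empty_support ha.1 (Set.not_nonempty_iff_eq_empty.mp hne)
      subst ha0
      ext y
      constructor
      · rintro ⟨x, ⟨hPx, hx0, hxa⟩, rfl⟩
        have hx0' : x = 0 := le_antisymm hxa hx0
        subst hx0'
        exact ⟨trivial, by rw [hSb0], by rw [hSb0]⟩
      · rintro ⟨-, hy0, hya⟩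
        rw [hSb0] at hya
        have : y = 0 := le_antisymm hya hy0
        subst this
        exact ⟨0, ⟨DL.mcmem_zero, le_rfl, le_rfl⟩, hSb0⟩
  -- sup
  · intro a b s ha hb hs hsup
    have hseq : s = DL.ssup a b := DL.sup_is_ssup _ (DL.mcmem_ssup ha hb) hsup
    set M : Set X := msupport a ∪ msupport b with hMdef
    by_cases hne : M.Nonempty
    · have hKc : IsCompact M := ha.2.union hb.2
      have emb := DL.embVal hKc
      have hcont : Continuous (Subtype.val : M → X) :=
        continuous_subtype_val
      have hssub : msupport s ⊆ M := by
        rw [hseq, hMdef]; exact DL.msupport_ssup_subset a b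
      have hSbs : Sb s = S _ (DL.comapSM (Subtype.val : M → X) s) :=
        hcoh s hs _ hne hKc hssub
      have hSba : Sb a = S _ (DL.comapSM (Subtype.val : M → X) a) :=
        hcoh a ha _ hne hKc (hMdef ▸ Set.subset_union_left)
      have hSbb : Sb b = S _ (DL.comapSM (Subtype.val : M → X) b) :=
        hcoh b hb _ hne hKc (hMdef ▸ Set.subset_union_right)
      have hcs : DL.comapSM (Subtype.val : M → X) s
          = DL.ssup (DL.comapSM (Subtype.val : M → X) a)
            (DL.comapSM (Subtype.val : M → X) b) := by
        rw [hseq, DL.comap_ssup emb]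
      have hkey := (hS _ hne hKc).2.2.2.2.2
        (DL.comapSM (Subtype.val : M → X) a)
        (DL.comapSM (Subtype.val : M → X) b)
        (DL.comapSM (Subtype.val : M → X) s)
        (DL.radon_comap' hKc ha.1) (DL.radon_comap' hKc hb.1)
        (DL.radon_comap' hKc hs.1)
        ⟨DL.comap_mono emb hsup.1, DL.comap_mono emb hsup.2.1, by
          intro r hr h1 h2
          rw [hcs]
          exact DL.ssup_le h1 h2⟩
      refine ⟨by rw [hSba, hSbs]; exact hkey.1, by rw [hSbb, hSbs]; exact hkey.2.1, ?_⟩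
      intro t _ h1 h2
      rw [hSbs]
      refine hkey.2.2 t trivial ?_ ?_
      · rw [← hSba]; exact h1
      · rw [← hSbb]; exact h2
    · rw [hMdef, Set.not_nonempty_iff_eq_empty, Set.union_empty_iff] at hne
      have ha0 : a = 0 := DL.eq_zero_of_empty_support ha.1 hne.1
      have hb0 : b = 0 := DL.eq_zero_of_empty_support hb.1 hne.2
      have hs0 : s = 0 := by
        rw [hseq, ha0, hb0]
        exact DL.ssup_zero X
      refine ⟨?_, ?_, ?_⟩
      · rw [ha0, hs0]
      · rw [hb0, hs0]
      · intro t _ h1 _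
        rw [hs0, hSb0]
        rw [ha0, hSb0] at h1
        exact h1
  -- uniqueness
  · intro Sb' ⟨hIPLH', hagree'⟩ ν hν
    by_cases hne : (msupport ν).Nonempty
    · have hM : IsCompact (msupport ν) := hν.2
      have hrad : IsRadon (DL.comapSM (Subtype.val : (msupport ν) → X) ν) :=
        DL.radon_comap' hM hν.1
      have h1 : ν = extMeas (msupport ν) (DL.comapSM (Subtype.val : (msupport ν) → X) ν) :=
        (DL.extMeas_comapSM hM hν.1 subset_rfl).symm
      calc Sb' ν = Sb' (extMeas (msupport ν) (DL.comapSM (Subtype.val : (msupport ν) → X) ν)) :=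
            by rw [← h1]
        _ = S (msupport ν) (DL.comapSM (Subtype.val : (msupport ν) → X) ν) :=
            hagree' _ hne hM _ hrad
        _ = Sb ν := (hcoh ν hν _ hne hM subset_rfl).symm
    · have hν0 : ν = 0 :=
        DL.eq_zero_of_empty_support hν.1 (Set.not_nonempty_iff_eq_empty.mp hne)
      subst hν0
      have h1 := hIPLH'.1 0 0 DL.mcmem_zero DL.mcmem_zero
      rw [add_zero] at h1
      have h2 : Sb' 0 + Sb' 0 = Sb' 0 + 0 := by rw [add_zero, ← h1]
      rw [hSb0, add_left_cancel h2]
end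

section
/- Let I be a directed set and for each α ∈ I let X_α be a realcompact space. For α ⪯ β let θ_{α,β} : X_α → X_β be continuous maps with θ_{α,α} = id such that the induced lattice homomorphisms T_{β,α} : C(X_β) → C(X_α), u ↦ u ∘ θ_{α,β}, satisfy T_{γ,α} = T_{β,α} ∘ T_{γ,β} for all α ⪯ β ⪯ γ. Then: (i) ((X_α), (θ_{α,β})) is a direct system of topological spaces, i.e., θ_{β,γ} ∘ θ_{α,β} = θ_{α,γ} for all α ⪯ β ⪯ γ; and (ii) if (X, (θ_α)_{α∈I}) is a direct limit (colimit) of this system in the category of topological spaces, then (C(X), (T_α)) with T_α(u) = u ∘ θ_α is an inverse limit of ((C(X_α)), (T_{β,α})) in the category of vector lattices and lattice homomorphisms: for every vector lattice F and lattice homomorphisms S_α : F → C(X_α) with T_{β,α} ∘ S_β = S_α for α ⪯ β, there is a unique lattice homomorphism S : F → C(X) with T_α ∘ S = S_α for all α ∈ I. -/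
open Function Topology

/-- Continuous real-valued functions separate continuous maps into a realcompact space. -/
theorem Realcompact.sep {Y : Type u} [TopologicalSpace Y] (h : Realcompact Y)
    {W : Type*} [TopologicalSpace W] (f g : C(W, Y))
    (huv : ∀ u : C(Y, ℝ), u.comp f = u.comp g) : f = g := by
  obtain ⟨κ, s, -, ⟨e⟩⟩ := h
  ext x
  apply e.injective
  apply Subtype.ext
  funext i
  have := congrFun (congrArg DFunLike.coe
    (huv ⟨fun y => (e y : κ → ℝ) i,
      (continuous_apply i).comp (continuous_subtype_val.comp e.continuous)⟩)) x
  exact this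

/-- Suppose each `X_α` is realcompact and the continuous maps
`θ_{α,β} : X_α → X_β` are such that the induced maps `T_{β,α} : C(X_β) → C(X_α)`,
`u ↦ u ∘ θ_{α,β}`, form an inverse system.  Then (i) `((X_α), (θ_{α,β}))` is a direct
system of topological spaces, and (ii) if `(X, (θ_α))` is a direct limit (colimit) of
this system, then `(C(X), (T_α))` is an inverse limit of `((C(X_α)), (T_{β,α}))` in the
category of vector lattices and lattice homomorphisms. -/
theorem realcompact_system_colimit
    {ι : Type u} [Preorder ι] [IsDirected ι (· ≤ ·)]
    (Xa : ι → Type u) (tsa : ∀ a, TopologicalSpace (Xa a))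
    (hrc : ∀ a : ι, Realcompact (Xa a))
    (θab : ∀ a b : ι, a ≤ b → C(Xa a, Xa b))
    (hid : ∀ a : ι, θab a a le_rfl = ContinuousMap.id (Xa a))
    (hT : ∀ (a b c : ι) (hab : a ≤ b) (hbc : b ≤ c) (u : C(Xa c, ℝ)),
      (u.comp (θab b c hbc)).comp (θab a b hab) = u.comp (θab a c (hab.trans hbc))) :
    -- (i) the spaces form a direct system in Top
    (∀ (a b c : ι) (hab : a ≤ b) (hbc : b ≤ c),
      (θab b c hbc).comp (θab a b hab) = θab a c (hab.trans hbc)) ∧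
    -- (ii) C(-) turns a colimit of this system into an inverse limit of vector lattices
    (∀ (X : Type u) (_ : TopologicalSpace X) (θa : ∀ a : ι, C(Xa a, X)),
      (∀ (a b : ι) (hab : a ≤ b), (θa b).comp (θab a b hab) = θa a) →
      (∀ (Z : Type u) (_ : TopologicalSpace Z) (g : ∀ a : ι, C(Xa a, Z)),
        (∀ (a b : ι) (hab : a ≤ b), (g b).comp (θab a b hab) = g a) →
        ∃! G : C(X, Z), ∀ a : ι, G.comp (θa a) = g a) →
      (∀ (a b : ι) (hab : a ≤ b) (u : C(X, ℝ)),
        (u.comp (θa b)).comp (θab a b hab) = u.comp (θa a)) ∧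
      (∀ (F : Type u) (_ : Lattice F) (_ : AddCommGroup F) (_ : Module ℝ F),
        (∀ x y z : F, x ≤ y → x + z ≤ y + z) →
        (∀ (c : ℝ) (x : F), 0 ≤ c → 0 ≤ x → 0 ≤ c • x) →
        ∀ S : ∀ a : ι, F →ₗ[ℝ] C(Xa a, ℝ),
          (∀ (a : ι) (x y : F), S a (x ⊔ y) = S a x ⊔ S a y) →
          (∀ (a b : ι) (hab : a ≤ b) (x : F), (S b x).comp (θab a b hab) = S a x) →
          ∃! Sb : F →ₗ[ℝ] C(X, ℝ),
            (∀ x y : F, Sb (x ⊔ y) = Sb x ⊔ Sb y) ∧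
            (∀ (a : ι) (x : F), (Sb x).comp (θa a) = S a x))) := by
  constructor
  · intro a b c hab hbc
    exact (hrc c).sep _ _ fun u =>
      (ContinuousMap.comp_assoc u _ _).symm.trans (hT a b c hab hbc u)
  · intro X tX θa hθ hcolim
    constructor
    · intro a b hab u
      rw [ContinuousMap.comp_assoc, hθ a b hab]
    · intro F _ _ _ _ _ S hSsup hScomp
      set up : C(ℝ, ULift.{u} ℝ) := ⟨Homeomorph.ulift.symm, Homeomorph.ulift.symm.continuous⟩ with hup
      -- uniqueness of continuous maps out of the colimit
      have huniq : ∀ u v : C(X, ℝ), (∀ a, u.comp (θa a) = v.comp (θa a)) → u = v := by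
        intro u v h
        have h1 := hcolim (ULift.{u} ℝ) inferInstance (fun a => up.comp (u.comp (θa a)))
          (fun a b hab => by
            rw [ContinuousMap.comp_assoc, ContinuousMap.comp_assoc, hθ a b hab])
        have e1 : up.comp u = up.comp v :=
          (h1.unique (fun a => (ContinuousMap.comp_assoc up u (θa a)).symm)
            (fun a => ((ContinuousMap.comp_assoc up v (θa a)).symm.trans
              (congrArg up.comp (h a).symm))))
        ext x
        exact ULift.up_injective (congrFun (congrArg DFunLike.coe e1) x)
      have hex : ∀ x : F, ∃ w : C(X, ℝ), ∀ a, w.comp (θa a) = S a x := by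
        intro x
        obtain ⟨G, hG, -⟩ := hcolim (ULift.{u} ℝ) inferInstance (fun a => up.comp (S a x))
          (fun a b hab => by rw [ContinuousMap.comp_assoc, hScomp a b hab x])
        refine ⟨(⟨Homeomorph.ulift, Homeomorph.ulift.continuous⟩ : C(ULift.{u} ℝ, ℝ)).comp G, fun a => ?_⟩
        rw [ContinuousMap.comp_assoc, hG a]
        ext y; rfl
      choose f hf using hex
      have hadd : ∀ x y : F, f (x + y) = f x + f y := by
        intro x y
        refine huniq _ _ fun a => ?_
        rw [hf (x + y) a, map_add]
        ext w
        simp only [ContinuousMap.comp_apply, ContinuousMap.add_apply]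
        rw [← ContinuousMap.comp_apply, ← ContinuousMap.comp_apply, hf x a, hf y a]
      have hsmul : ∀ (c : ℝ) (x : F), f (c • x) = c • f x := by
        intro c x
        refine huniq _ _ fun a => ?_
        rw [hf (c • x) a, map_smul]
        ext w
        simp only [ContinuousMap.comp_apply, ContinuousMap.smul_apply]
        rw [← ContinuousMap.comp_apply, hf x a]
      refine ⟨{ toFun := f, map_add' := hadd, map_smul' := hsmul }, ?_, ?_⟩
      · constructor
        · intro x y
          show f (x ⊔ y) = f x ⊔ f y
          refine huniq _ _ fun a => ?_
          rw [hf (x ⊔ y) a, hSsup a x y]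
          ext w
          simp only [ContinuousMap.comp_apply, ContinuousMap.sup_apply]
          rw [← ContinuousMap.comp_apply, ← ContinuousMap.comp_apply, hf x a, hf y a]
        · exact fun a x => hf x a
      · rintro Sb' ⟨-, h2⟩
        exact LinearMap.ext fun x =>
          huniq (Sb' x) (f x) fun a => (h2 a x).trans (hf x a).symm
end
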